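/- arXiv:2012.02057 — 8 statements merged into one kernel-verified Lean document; each statement's English description precedes it below -/
import Mathlib

section
/- Let H be the diamond graph K_{1,1,2}, W a graphon (measurable symmetric function [0,1]^2 → [0,1]), and U = 2W - 1. Then |t_{K_3^+}(U)| ≤ sqrt(t_{K_{1,2}}(U) · t_{C_4}(U)), where K_3^+ denotes a triangle with a pendant edge, K_{1,2} is the path with two edges, and C_4 is the 4-cycle. -/
open MeasureTheory

/-- Homomorphism density of a single edge `K₂`. -/
noncomputable def tK2 (U : unitInterval → unitInterval → ℝ) : ℝ :=
  ∫ x : Fin 2 → unitInterval, U (x 0) (x 1)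

/-- Homomorphism density of the cherry/path `K_{1,2}`. -/
noncomputable def tP3 (U : unitInterval → unitInterval → ℝ) : ℝ :=
  ∫ x : Fin 3 → unitInterval, U (x 0) (x 1) * U (x 1) (x 2)

/-- Homomorphism density of the triangle `K₃`. -/
noncomputable def tK3 (U : unitInterval → unitInterval → ℝ) : ℝ :=
  ∫ x : Fin 3 → unitInterval, U (x 0) (x 1) * U (x 1) (x 2) * U (x 2) (x 0)

/-- Homomorphism density of the 4-cycle `C₄`. -/
noncomputable def tC4 (U : unitInterval → unitInterval → ℝ) : ℝ :=
  ∫ x : Fin 4 → unitInterval, U (x 0) (x 1) * U (x 1) (x 2) * U (x 2) (x 3) * U (x 3) (x 0)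

/-- Homomorphism density of the triangle with a pendant edge `K₃⁺`. -/
noncomputable def tK3p (U : unitInterval → unitInterval → ℝ) : ℝ :=
  ∫ x : Fin 4 → unitInterval, U (x 0) (x 1) * U (x 1) (x 2) * U (x 2) (x 0) * U (x 2) (x 3)

/-- Homomorphism density of the diamond `D = K_{1,1,2}`. -/
noncomputable def tD (U : unitInterval → unitInterval → ℝ) : ℝ :=
  ∫ x : Fin 4 → unitInterval,
    U (x 0) (x 1) * U (x 0) (x 2) * U (x 0) (x 3) * U (x 1) (x 2) * U (x 1) (x 3)

/-- Homomorphism density of the octahedron `K_{2,2,2}` (parts `{0,1},{2,3},{4,5}`). -/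
noncomputable def tK222 (U : unitInterval → unitInterval → ℝ) : ℝ :=
  ∫ x : Fin 6 → unitInterval,
    U (x 0) (x 2) * U (x 0) (x 3) * U (x 0) (x 4) * U (x 0) (x 5) *
    U (x 1) (x 2) * U (x 1) (x 3) * U (x 1) (x 4) * U (x 1) (x 5) *
    U (x 2) (x 4) * U (x 2) (x 5) * U (x 3) (x 4) * U (x 3) (x 5)

/-- `W` is a graphon: measurable, symmetric, with values in `[0,1]`. -/
def IsGraphon (W : unitInterval → unitInterval → ℝ) : Prop :=
  Measurable (fun p : unitInterval × unitInterval => W p.1 p.2) ∧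
    (∀ x y, W x y = W y x) ∧ (∀ x y, 0 ≤ W x y) ∧ (∀ x y, W x y ≤ 1)

/-- The complementary graphon `1 - W`. -/
def compl' (W : unitInterval → unitInterval → ℝ) : unitInterval → unitInterval → ℝ :=
  fun x y => 1 - W x y


/-! Integrating out the pendant vertex and then the vertex opposite the edge `bc` gives
`t_{K₃⁺}(U) = ∫∫ U(b,c) d(c) g(b,c)`, with degree `d(c) = ∫ U(c,t) dt` and codegree
`g(b,c) = ∫ U(t,b) U(t,c) dt`. Cauchy–Schwarz on `[0,1]²` bounds this by
`√(∫∫ U(b,c)² d(c)² · ∫∫ g²)`, where `∫∫ g² = t_{C₄}(U)` and, as `U² ≤ 1`,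
`∫∫ U(b,c)² d(c)² ≤ ∫ d² = t_{K_{1,2}}(U)`. -/

section Integration

variable {α : Type*} [MeasureSpace α] [SigmaFinite (volume : Measure α)]

theorem integral_pi_eq_integral_insertNth {n : ℕ} (i : Fin (n + 1))
    {f : (Fin (n + 1) → α) → ℝ} (hf : Integrable f) :
    ∫ x, f x = ∫ a : α, ∫ y : Fin n → α, f (i.insertNth a y) := by
  have e := (volume_preserving_piFinSuccAbove (fun _ : Fin (n + 1) => α) i).symm
  rw [← e.integral_comp (MeasurableEquiv.measurableEmbedding _), Measure.volume_eq_prod,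
    integral_prod]
  · rfl
  · exact (e.integrable_comp_emb (MeasurableEquiv.measurableEmbedding _)).2 hf

theorem integral_fin_two_mul (f g : α → ℝ) :
    ∫ x : Fin 2 → α, f (x 0) * g (x 1) = (∫ a, f a) * ∫ a, g a := by
  rw [volume_pi]
  simpa [Fin.prod_univ_two] using integral_fin_nat_prod_eq_prod (μ := fun _ => volume) ![f, g]

end Integration

theorem abs_integral_mul_le_sqrt {α : Type*} [MeasurableSpace α] {μ : Measure α}
    {f g : α → ℝ} (hf : MemLp f 2 μ) (hg : MemLp g 2 μ) :
    |∫ x, f x * g x ∂μ| ≤ √((∫ x, f x ^ 2 ∂μ) * ∫ x, g x ^ 2 ∂μ) := by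
  have holder := integral_mul_norm_le_Lp_mul_Lq Real.HolderConjugate.two_two
    (by simpa using hf) (by simpa using hg)
  simp only [Real.norm_eq_abs, Real.rpow_two, sq_abs] at holder
  rw [Real.sqrt_eq_rpow, Real.mul_rpow (integral_nonneg fun _ => sq_nonneg _)
    (integral_nonneg fun _ => sq_nonneg _)]
  calc |∫ x, f x * g x ∂μ| ≤ ∫ x, |f x| * |g x| ∂μ := by
        simpa only [Real.norm_eq_abs, abs_mul] using
          norm_integral_le_integral_norm (fun x => f x * g x)
    _ ≤ _ := holder

open unitInterval

structure IsSignedGraphon (U : I → I → ℝ) : Prop where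
  measurable : Measurable fun p : I × I => U p.1 p.2
  symm : ∀ x y, U x y = U y x
  norm_le_one : ∀ x y, ‖U x y‖ ≤ 1

theorem IsGraphon.isSignedGraphon_two_mul_sub_one {W : I → I → ℝ} (hW : IsGraphon W) :
    IsSignedGraphon fun x y => 2 * W x y - 1 where
  measurable := (measurable_const.mul hW.1).sub measurable_const
  symm x y := by rw [hW.2.1 x y]
  norm_le_one x y := by
    rw [Real.norm_eq_abs, abs_le]
    constructor <;> linarith [hW.2.2.1 x y, hW.2.2.2 x y]

namespace SignedGraphon

noncomputable def degree (U : I → I → ℝ) (a : I) : ℝ := ∫ t, U a t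

noncomputable def codegree (U : I → I → ℝ) (a b : I) : ℝ := ∫ t, U t a * U t b

end SignedGraphon

namespace IsSignedGraphon

open SignedGraphon

variable {U : I → I → ℝ} (hU : IsSignedGraphon U)
include hU

theorem measurable_degree : Measurable (degree U) :=
  hU.measurable.stronglyMeasurable.integral_prod_right'.measurable

theorem measurable_codegree : Measurable fun p : I × I => codegree U p.1 p.2 := by
  have hm := hU.measurable
  have h : Measurable fun q : (I × I) × I => U q.2 q.1.1 * U q.2 q.1.2 := by fun_prop
  exact h.stronglyMeasurable.integral_prod_right'.measurable

theorem norm_degree_le_one (a : I) : ‖degree U a‖ ≤ 1 :=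
  norm_integral_le_of_norm_le_const (ae_of_all _ fun t => hU.norm_le_one a t) |>.trans_eq (by simp)

theorem norm_codegree_le_one (a b : I) : ‖codegree U a b‖ ≤ 1 := by
  have hb := hU.norm_le_one
  refine norm_integral_le_of_norm_le_const (C := 1) (ae_of_all _ fun t => ?_)
    |>.trans_eq (by simp)
  simp only [norm_mul]
  bound

theorem integral_left_eq_degree (b : I) : ∫ a, U a b = degree U b :=
  integral_congr_ae (ae_of_all _ fun a => hU.symm a b)

theorem tP3_eq_integral_degree_sq : tP3 U = ∫ b, degree U b ^ 2 := by
  have hm := hU.measurable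
  have hb := hU.norm_le_one
  calc tP3 U = ∫ b, ∫ y : Fin 2 → I, U (y 0) b * U b (y 1) :=
        integral_pi_eq_integral_insertNth 1
          (.of_bound (by fun_prop) 1 (ae_of_all _ fun x => by simp only [norm_mul]; bound))
    _ = ∫ b, (∫ a, U a b) * ∫ c, U b c := by
        congr 1; ext b; exact integral_fin_two_mul (fun a => U a b) (U b)
    _ = ∫ b, degree U b ^ 2 := by
        simp_rw [hU.integral_left_eq_degree, sq]
        rfl

theorem tK3p_eq_integral :
    tK3p U = ∫ p : I × I, U p.1 p.2 * degree U p.2 * codegree U p.1 p.2 := by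
  have hm := hU.measurable
  have hb := hU.norm_le_one
  have hd := hU.norm_degree_le_one
  have hg := hU.norm_codegree_le_one
  have hmd := hU.measurable_degree
  have hmg := hU.measurable_codegree
  have inner (b c : I) : ∫ z : Fin 2 → I, U (z 0) b * U b c * U c (z 0) * U c (z 1) =
      U b c * degree U c * codegree U b c := by
    calc _ = ∫ z : Fin 2 → I, U b c * ((U (z 0) b * U c (z 0)) * U c (z 1)) := by
          congr 1; ext z; ring
      _ = U b c * ((∫ a, U a b * U c a) * degree U c) := by
          rw [integral_const_mul, integral_fin_two_mul (fun a => U a b * U c a) (U c)]; rfl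
      _ = _ := by
          simp_rw [hU.symm c]
          unfold codegree
          ring
  rw [Measure.volume_eq_prod, integral_prod _
    (.of_bound (by fun_prop) 1 (ae_of_all _ fun x => by simp only [norm_mul]; bound))]
  calc tK3p U = ∫ b, ∫ y : Fin 3 → I, U (y 0) b * U b (y 1) * U (y 1) (y 0) * U (y 1) (y 2) :=
        integral_pi_eq_integral_insertNth 1
          (.of_bound (by fun_prop) 1 (ae_of_all _ fun x => by simp only [norm_mul]; bound))
    _ = ∫ b, ∫ c, ∫ z : Fin 2 → I, U (z 0) b * U b c * U c (z 0) * U c (z 1) := by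
        congr 1; ext b
        exact integral_pi_eq_integral_insertNth 1
          (.of_bound (by fun_prop) 1 (ae_of_all _ fun x => by simp only [norm_mul]; bound))
    _ = _ := by simp_rw [inner]

theorem tC4_eq_integral_codegree_sq : tC4 U = ∫ p : I × I, codegree U p.1 p.2 ^ 2 := by
  have hm := hU.measurable
  have hb := hU.norm_le_one
  have hg := hU.norm_codegree_le_one
  have hmg := hU.measurable_codegree
  have inner (b e : I) : ∫ z : Fin 2 → I, U (z 0) b * U b (z 1) * U (z 1) e * U e (z 0) =
      codegree U b e ^ 2 := by
    calc _ = ∫ z : Fin 2 → I, (U (z 0) b * U e (z 0)) * (U b (z 1) * U (z 1) e) := by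
          congr 1; ext z; ring
      _ = (∫ a, U a b * U e a) * ∫ c, U b c * U c e :=
          integral_fin_two_mul (fun a => U a b * U e a) (fun c => U b c * U c e)
      _ = _ := by
          simp_rw [hU.symm e, hU.symm b, sq]
          rfl
  rw [Measure.volume_eq_prod, integral_prod _
    (.of_bound (by fun_prop) 1 (ae_of_all _ fun x => by simp only [norm_pow]; bound))]
  calc tC4 U = ∫ b, ∫ y : Fin 3 → I, U (y 0) b * U b (y 1) * U (y 1) (y 2) * U (y 2) (y 0) :=
        integral_pi_eq_integral_insertNth 1
          (.of_bound (by fun_prop) 1 (ae_of_all _ fun x => by simp only [norm_mul]; bound))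
    _ = ∫ b, ∫ e, ∫ z : Fin 2 → I, U (z 0) b * U b (z 1) * U (z 1) e * U e (z 0) := by
        congr 1; ext b
        exact integral_pi_eq_integral_insertNth 2
          (.of_bound (by fun_prop) 1 (ae_of_all _ fun x => by simp only [norm_mul]; bound))
    _ = _ := by simp_rw [inner]

theorem integral_sq_mul_degree_le_tP3 :
    ∫ p : I × I, (U p.1 p.2 * degree U p.2) ^ 2 ≤ tP3 U := by
  have hm := hU.measurable
  have hb := hU.norm_le_one
  have hd := hU.norm_degree_le_one
  have hmd := hU.measurable_degree
  calc ∫ p : I × I, (U p.1 p.2 * degree U p.2) ^ 2 ≤ ∫ p : I × I, degree U p.2 ^ 2 := by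
        refine integral_mono
          (.of_bound (by fun_prop) 1
            (ae_of_all _ fun x => by simp only [norm_pow, norm_mul]; bound))
          (.of_bound
            (by fun_prop : Measurable fun p : I × I => degree U p.2 ^ 2).aestronglyMeasurable
            1 (ae_of_all _ fun x => by simp only [norm_pow]; bound))
          fun p => ?_
        rw [mul_pow]
        refine mul_le_of_le_one_left (sq_nonneg _) ?_
        simpa [sq_abs] using pow_le_one₀ (norm_nonneg _) (hb p.1 p.2) (n := 2)
    _ = tP3 U := by
        rw [Measure.volume_eq_prod, integral_fun_snd (fun c => degree U c ^ 2),
          hU.tP3_eq_integral_degree_sq]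
        simp

theorem abs_tK3p_le : |tK3p U| ≤ √(tP3 U * tC4 U) := by
  have hm := hU.measurable
  have hb := hU.norm_le_one
  have hd := hU.norm_degree_le_one
  have hg := hU.norm_codegree_le_one
  have hmd := hU.measurable_degree
  have hmg := hU.measurable_codegree
  rw [hU.tK3p_eq_integral, hU.tC4_eq_integral_codegree_sq]
  calc _ ≤ √((∫ p : I × I, (U p.1 p.2 * degree U p.2) ^ 2) *
        ∫ p : I × I, codegree U p.1 p.2 ^ 2) :=
        abs_integral_mul_le_sqrt
          (.of_bound (by fun_prop) 1 (ae_of_all _ fun x => by simp only [norm_mul]; bound))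
          (.of_bound (by fun_prop) 1 (ae_of_all _ fun x => hg _ _))
    _ ≤ _ := by
        gcongr
        exact hU.integral_sq_mul_degree_le_tP3

end IsSignedGraphon

/-- For a graphon `W` and `U = 2W - 1`:
`|t_{K₃⁺}(U)| ≤ √(t_{K_{1,2}}(U) · t_{C₄}(U))`. -/
theorem tK3p_abs_le (W : unitInterval → unitInterval → ℝ) (hW : IsGraphon W)
    (U : unitInterval → unitInterval → ℝ) (hU : U = fun x y => 2 * W x y - 1) :
    |tK3p U| ≤ Real.sqrt (tP3 U * tC4 U) :=
  IsSignedGraphon.abs_tK3p_le (hU ▸ hW.isSignedGraphon_two_mul_sub_one)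
end

section
/- Goodman's formula: for every graphon W, m_{K_3}(W) = (3/2)·m_{K_{1,2}}(W) - 1/2, where m_H(W) = t_H(W) + t_H(1-W). -/
open MeasureTheory

lemma integral_perm {n : ℕ} (e : Fin n ≃ Fin n) (g : (Fin n → unitInterval) → ℝ) :
    ∫ x : Fin n → unitInterval, g (fun i => x (e i)) = ∫ x, g x := by
  have h := MeasureTheory.volume_measurePreserving_piCongrLeft (fun _ : Fin n => unitInterval) e.symm
  rw [← h.integral_comp (MeasurableEquiv.piCongrLeft (fun _ => unitInterval) e.symm).measurableEmbedding g]
  refine integral_congr_ae (Filter.Eventually.of_forall fun x => ?_)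
  simp only []
  congr 1
  funext i
  have := MeasurableEquiv.piCongrLeft_apply_apply (β := fun _ : Fin n => unitInterval) e.symm x (e i)
  simp only [Equiv.symm_apply_apply] at this
  exact this.symm

lemma integrable_bdd {n : ℕ} (f : (Fin n → unitInterval) → ℝ) (hm : Measurable f)
    (h0 : ∀ x, 0 ≤ f x) (h1 : ∀ x, f x ≤ 1) :
    Integrable f (volume : Measure (Fin n → unitInterval)) :=
  ⟨hm.aestronglyMeasurable, HasFiniteIntegral.of_bounded (C := 1)
    (Filter.Eventually.of_forall fun x => by
      rw [Real.norm_eq_abs, abs_of_nonneg (h0 x)]; exact h1 x)⟩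


/-- Goodman's formula: `m_{K₃}(W) = (3/2)·m_{K_{1,2}}(W) - 1/2`. -/
theorem goodman (W : unitInterval → unitInterval → ℝ) (hW : IsGraphon W) :
    tK3 W + tK3 (compl' W) = 3 / 2 * (tP3 W + tP3 (compl' W)) - 1 / 2 := by
  obtain ⟨hm, hsym, h0, h1⟩ := hW
  set a : (Fin 3 → unitInterval) → ℝ := fun x => W (x 0) (x 1) with ha
  set b : (Fin 3 → unitInterval) → ℝ := fun x => W (x 1) (x 2) with hb
  set c : (Fin 3 → unitInterval) → ℝ := fun x => W (x 2) (x 0) with hc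
  have mf : ∀ i j : Fin 3, Measurable fun x : Fin 3 → unitInterval => W (x i) (x j) :=
    fun i j => hm.comp (((measurable_pi_apply i).prodMk (measurable_pi_apply j) : Measurable fun x : Fin 3 → unitInterval => (x i, x j)))
  have ia : Integrable a := integrable_bdd a (mf 0 1) (fun x => h0 _ _) (fun x => h1 _ _)
  have ib : Integrable b := integrable_bdd b (mf 1 2) (fun x => h0 _ _) (fun x => h1 _ _)
  have ic : Integrable c := integrable_bdd c (mf 2 0) (fun x => h0 _ _) (fun x => h1 _ _)
  have iab : Integrable (fun x => a x * b x) :=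
    integrable_bdd _ ((mf 0 1).mul (mf 1 2)) (fun x => mul_nonneg (h0 _ _) (h0 _ _))
      (fun x => mul_le_one₀ (h1 _ _) (h0 _ _) (h1 _ _))
  have ibc : Integrable (fun x => b x * c x) :=
    integrable_bdd _ ((mf 1 2).mul (mf 2 0)) (fun x => mul_nonneg (h0 _ _) (h0 _ _))
      (fun x => mul_le_one₀ (h1 _ _) (h0 _ _) (h1 _ _))
  have ica : Integrable (fun x => c x * a x) :=
    integrable_bdd _ ((mf 2 0).mul (mf 0 1)) (fun x => mul_nonneg (h0 _ _) (h0 _ _))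
      (fun x => mul_le_one₀ (h1 _ _) (h0 _ _) (h1 _ _))
  have iabc : Integrable (fun x => a x * b x * c x) :=
    integrable_bdd _ (((mf 0 1).mul (mf 1 2)).mul (mf 2 0))
      (fun x => mul_nonneg (mul_nonneg (h0 _ _) (h0 _ _)) (h0 _ _))
      (fun x => mul_le_one₀ (mul_le_one₀ (h1 _ _) (show (0:ℝ) ≤ b x from h0 _ _) (h1 _ _)) (show (0:ℝ) ≤ c x from h0 _ _) (show c x ≤ 1 from h1 _ _))
  -- the cyclic permutation
  let e : Fin 3 ≃ Fin 3 := ⟨![1,2,0], ![2,0,1], by decide, by decide⟩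
  have hb_eq : ∫ x, b x = ∫ x, a x := by
    have := integral_perm e a
    simpa [ha, hb, e] using this
  have hc_eq : ∫ x, c x = ∫ x, b x := by
    have := integral_perm e b
    simpa [hb, hc, e] using this
  have hbc : ∫ x, b x * c x = ∫ x, a x * b x := by
    have := integral_perm e (fun x => a x * b x)
    simpa [ha, hb, hc, e] using this
  have hca : ∫ x, c x * a x = ∫ x, b x * c x := by
    have := integral_perm e (fun x => b x * c x)
    simpa [ha, hb, hc, e] using this
  have h1' : ∫ (_ : Fin 3 → unitInterval), (1:ℝ) = 1 := by simp
  have hk3 : tK3 W = ∫ x, a x * b x * c x := rfl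
  have hp3 : tP3 W = ∫ x, a x * b x := rfl
  have hk3c : tK3 (compl' W) = ∫ x, (1 - a x) * (1 - b x) * (1 - c x) := rfl
  have hp3c : tP3 (compl' W) = ∫ x, (1 - a x) * (1 - b x) := rfl
  have j1 : Integrable (fun x : Fin 3 → unitInterval => (1:ℝ) - a x) := (integrable_const 1).sub ia
  have j2 : Integrable (fun x : Fin 3 → unitInterval => (1:ℝ) - a x - b x) := j1.sub ib
  have j3 : Integrable (fun x : Fin 3 → unitInterval => (1:ℝ) - a x - b x - c x) := j2.sub ic
  have j4 : Integrable (fun x : Fin 3 → unitInterval => a x * b x + b x * c x) := iab.add ibc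
  have j5 : Integrable (fun x : Fin 3 → unitInterval => a x * b x + b x * c x + c x * a x) := j4.add ica
  have j6 : Integrable (fun x : Fin 3 → unitInterval => ((1:ℝ) - a x - b x - c x) + (a x * b x + b x * c x + c x * a x)) := j3.add j5
  have key3 : ∫ x, (1 - a x) * (1 - b x) * (1 - c x)
      = ((((∫ (_ : Fin 3 → unitInterval), (1:ℝ)) - ∫ x, a x) - ∫ x, b x) - ∫ x, c x)
        + (((∫ x, a x * b x) + ∫ x, b x * c x) + ∫ x, c x * a x)
        - ∫ x, a x * b x * c x := by
    rw [← integral_sub (integrable_const 1) ia,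
      ← integral_sub j1 ib, ← integral_sub j2 ic,
      ← integral_add iab ibc, ← integral_add j4 ica,
      ← integral_add j3 j5, ← integral_sub j6 iabc]
    congr 1; funext x; ring
  have key2 : ∫ x, (1 - a x) * (1 - b x)
      = (((∫ (_ : Fin 3 → unitInterval), (1:ℝ)) - ∫ x, a x) - ∫ x, b x) + ∫ x, a x * b x := by
    rw [← integral_sub (integrable_const 1) ia,
      ← integral_sub j1 ib, ← integral_add j2 iab]
    congr 1; funext x; ring
  rw [hk3, hk3c, hp3, hp3c, key3, key2, h1', hca, hbc, hc_eq, hb_eq]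
  ring
end

section
/- For every graphon W and for H any graph, m_H(W) = 2^{1-e(H)} · (1 + Σ_{F ∈ E_+(H)} t_F(2W-1)), where E_+(H) is the collection of nonempty subgraphs of H (on the same vertex set, i.e., edge subsets) with an even number of edges. -/
open MeasureTheory

/-- Homomorphism density of a finite simple graph `G` in a kernel
`W : [0,1]² → ℝ` (symmetrised, which agrees with the usual definition for
symmetric `W`). -/
noncomputable def homDensity {V : Type*} [Fintype V] [DecidableEq V]
    (G : SimpleGraph V) (W : unitInterval → unitInterval → ℝ) : ℝ :=
  letI := Classical.decRel G.Adj
  ∫ x : V → unitInterval, ∏ e ∈ G.edgeFinset,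
    Sym2.lift ⟨fun a b => (W (x a) (x b) + W (x b) (x a)) / 2, fun a b => by ring⟩ e

/-- Density of a subgraph given by an edge subset `F ⊆ E(H)`. -/
noncomputable def edgeSetDensity {V : Type*} [Fintype V]
    (F : Finset (Sym2 V)) (W : unitInterval → unitInterval → ℝ) : ℝ :=
  ∫ x : V → unitInterval, ∏ e ∈ F,
    Sym2.lift ⟨fun a b => (W (x a) (x b) + W (x b) (x a)) / 2, fun a b => by ring⟩ e

/-!
With `U = 2W - 1`, the symmetrised edge factors of `W` and `1 - W` are `(1 + u_e)/2` and
`(1 - u_e)/2`. Expanding `∏ (1 + u_e) + ∏ (1 - u_e)` over edge subsets, the odd subsets cancel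
and the even ones appear twice; integrating term by term gives the formula, the empty subset
contributing the `1`.
-/

namespace Finset

variable {ι R : Type*}

theorem prod_one_sub [CommRing R] (s : Finset ι) (u : ι → R) :
    ∏ i ∈ s, (1 - u i) = ∑ t ∈ s.powerset, (-1) ^ t.card * ∏ i ∈ t, u i := by
  simp only [sub_eq_add_neg, prod_one_add, prod_neg]

theorem prod_one_add_add_prod_one_sub [CommRing R] (s : Finset ι) (u : ι → R) :
    ∏ i ∈ s, (1 + u i) + ∏ i ∈ s, (1 - u i) =
      2 * ∑ t ∈ s.powerset with Even t.card, ∏ i ∈ t, u i := by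
  rw [prod_one_add, prod_one_sub, ← sum_add_distrib, sum_filter, mul_sum]
  refine sum_congr rfl fun t _ => ?_
  rcases Nat.even_or_odd t.card with h | h
  · rw [h.neg_one_pow, if_pos h]; ring
  · rw [h.neg_one_pow, if_neg (Nat.not_even_iff_odd.mpr h)]; ring

theorem filter_even_card_powerset_eq_insert_empty [DecidableEq ι] (s : Finset ι) :
    {t ∈ s.powerset | Even t.card} = insert ∅ {t ∈ s.powerset | t ≠ ∅ ∧ Even t.card} := by
  ext t
  by_cases ht : t = ∅ <;> simp [ht]

theorem prod_one_add_half_add_prod_one_sub_half [DecidableEq ι] [Field R] [NeZero (2 : R)]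
    (s : Finset ι) (u : ι → R) :
    ∏ i ∈ s, ((1 + u i) / 2) + ∏ i ∈ s, ((1 - u i) / 2) =
      2 ^ (1 - (s.card : ℤ)) * (1 + ∑ t ∈ s.powerset with t ≠ ∅ ∧ Even t.card, ∏ i ∈ t, u i) := by
  rw [prod_div_distrib, prod_div_distrib, ← add_div, prod_one_add_add_prod_one_sub,
    filter_even_card_powerset_eq_insert_empty, sum_insert (by simp), prod_empty, prod_const,
    zpow_sub₀ two_ne_zero, zpow_one, zpow_natCast]
  ring

end Finset

section SymmEdgeWeight

variable {V : Type*}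

noncomputable def symmEdgeWeight (K : unitInterval → unitInterval → ℝ) (x : V → unitInterval) :
    Sym2 V → ℝ :=
  Sym2.lift ⟨fun a b => (K (x a) (x b) + K (x b) (x a)) / 2, fun a b => by ring⟩

theorem symmEdgeWeight_eq_one_add_div_two (W : unitInterval → unitInterval → ℝ)
    (x : V → unitInterval) (e : Sym2 V) :
    symmEdgeWeight W x e = (1 + symmEdgeWeight (fun s t => 2 * W s t - 1) x e) / 2 :=
  Sym2.inductionOn e fun a b => by simp only [symmEdgeWeight, Sym2.lift_mk]; ring

theorem symmEdgeWeight_compl' (W : unitInterval → unitInterval → ℝ)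
    (x : V → unitInterval) (e : Sym2 V) :
    symmEdgeWeight (compl' W) x e = (1 - symmEdgeWeight (fun s t => 2 * W s t - 1) x e) / 2 :=
  Sym2.inductionOn e fun a b => by simp only [symmEdgeWeight, Sym2.lift_mk, compl']; ring

theorem abs_symmEdgeWeight_le {K : unitInterval → unitInterval → ℝ} {C : ℝ}
    (hK : ∀ s t, |K s t| ≤ C) (x : V → unitInterval) (e : Sym2 V) :
    |symmEdgeWeight K x e| ≤ C :=
  Sym2.inductionOn e fun a b => by
    simp only [symmEdgeWeight, Sym2.lift_mk]
    rw [abs_div, abs_two, div_le_iff₀ two_pos]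
    linarith [abs_add_le (K (x a) (x b)) (K (x b) (x a)), hK (x a) (x b), hK (x b) (x a)]

theorem measurable_symmEdgeWeight {K : unitInterval → unitInterval → ℝ}
    (hK : Measurable fun p : unitInterval × unitInterval => K p.1 p.2) (e : Sym2 V) :
    Measurable fun x : V → unitInterval => symmEdgeWeight K x e :=
  Sym2.inductionOn e fun a b => by
    simp only [symmEdgeWeight, Sym2.lift_mk]
    have hK' : ∀ u v : V, Measurable fun x : V → unitInterval => K (x u) (x v) := fun u v =>
      hK.comp (f := fun x : V → unitInterval => (x u, x v))
        ((measurable_pi_apply u).prodMk (measurable_pi_apply v))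
    exact ((hK' a b).add (hK' b a)).div_const 2

variable [Fintype V]

theorem edgeSetDensity_eq_integral (F : Finset (Sym2 V)) (K : unitInterval → unitInterval → ℝ) :
    edgeSetDensity F K = ∫ x : V → unitInterval, ∏ e ∈ F, symmEdgeWeight K x e :=
  rfl

theorem homDensity_eq_edgeSetDensity [DecidableEq V] (G : SimpleGraph V) [DecidableRel G.Adj]
    (K : unitInterval → unitInterval → ℝ) : homDensity G K = edgeSetDensity G.edgeFinset K := by
  rw [homDensity, edgeSetDensity]
  congr!

theorem integrable_prod_symmEdgeWeight {K : unitInterval → unitInterval → ℝ} {C : ℝ}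
    (hm : Measurable fun p : unitInterval × unitInterval => K p.1 p.2)
    (hK : ∀ s t, |K s t| ≤ C) (F : Finset (Sym2 V)) :
    Integrable fun x : V → unitInterval => ∏ e ∈ F, symmEdgeWeight K x e := by
  refine Integrable.of_bound
    (Finset.measurable_prod F fun e _ => measurable_symmEdgeWeight hm e).aestronglyMeasurable
    (C ^ F.card) (ae_of_all _ fun x => ?_)
  rw [Real.norm_eq_abs, Finset.abs_prod]
  exact (Finset.prod_le_prod (fun e _ => abs_nonneg _)
    fun e _ => abs_symmEdgeWeight_le hK x e).trans_eq (Finset.prod_const C)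

theorem edgeSetDensity_add_edgeSetDensity_compl' [DecidableEq V]
    {W : unitInterval → unitInterval → ℝ} {C : ℝ}
    (hm : Measurable fun p : unitInterval × unitInterval => W p.1 p.2)
    (hC : ∀ s t, |W s t| ≤ C) (E : Finset (Sym2 V)) :
    edgeSetDensity E W + edgeSetDensity E (compl' W) =
      2 ^ (1 - (E.card : ℤ)) * (1 + ∑ F ∈ E.powerset with F ≠ ∅ ∧ Even F.card,
        edgeSetDensity F (fun s t => 2 * W s t - 1)) := by
  have hmU : Measurable fun p : unitInterval × unitInterval => 2 * W p.1 p.2 - 1 :=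
    (hm.const_mul 2).sub_const 1
  have hU : ∀ s t, |2 * W s t - 1| ≤ 2 * C + 1 := fun s t =>
    (abs_sub _ _).trans (by rw [abs_mul, abs_two, abs_one]; linarith [hC s t])
  have hmW' : Measurable fun p : unitInterval × unitInterval => compl' W p.1 p.2 :=
    measurable_const.sub hm
  have hW' : ∀ s t, |compl' W s t| ≤ 1 + C := fun s t =>
    (abs_sub _ _).trans (by rw [abs_one]; linarith [hC s t])
  have hint := integrable_prod_symmEdgeWeight (V := V) hmU hU
  calc edgeSetDensity E W + edgeSetDensity E (compl' W)
      = ∫ x : V → unitInterval, 2 ^ (1 - (E.card : ℤ)) *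
          (1 + ∑ F ∈ E.powerset with F ≠ ∅ ∧ Even F.card,
            ∏ e ∈ F, symmEdgeWeight (fun s t => 2 * W s t - 1) x e) := by
        rw [edgeSetDensity_eq_integral, edgeSetDensity_eq_integral, ← integral_add
          (integrable_prod_symmEdgeWeight hm hC E) (integrable_prod_symmEdgeWeight hmW' hW' E)]
        congr 1 with x
        rw [Finset.prod_congr rfl fun e _ => symmEdgeWeight_eq_one_add_div_two W x e,
          Finset.prod_congr rfl fun e _ => symmEdgeWeight_compl' W x e]
        exact Finset.prod_one_add_half_add_prod_one_sub_half E _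
    _ = _ := by
        rw [integral_const_mul, integral_add (integrable_const 1)
          (integrable_finsetSum _ fun F _ => hint F), integral_finsetSum _ fun F _ => hint F]
        simp [edgeSetDensity_eq_integral]

end SymmEdgeWeight

/-- For every graph `H` and graphon `W`:
`m_H(W) = 2^{1-e(H)} · (1 + ∑_{F ∈ 𝓔₊(H)} t_F(2W-1))`, where `𝓔₊(H)` is the set of
nonempty edge subsets of `H` of even cardinality. -/
theorem mH_even_expansion {V : Type*} [Fintype V] [DecidableEq V]
    (H : SimpleGraph V) [DecidableRel H.Adj]
    (W : unitInterval → unitInterval → ℝ) (hW : IsGraphon W) :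
    homDensity H W + homDensity H (compl' W) =
      (2 : ℝ) ^ (1 - (H.edgeFinset.card : ℤ)) *
        (1 + ∑ F ∈ H.edgeFinset.powerset.filter (fun F => F ≠ ∅ ∧ Even F.card),
          edgeSetDensity F (fun x y => 2 * W x y - 1)) := by
  rw [homDensity_eq_edgeSetDensity, homDensity_eq_edgeSetDensity]
  obtain ⟨hm, -, h0, h1⟩ := hW
  exact edgeSetDensity_add_edgeSetDensity_compl' hm
    (fun s t => abs_le.2 ⟨by linarith [h0 s t], h1 s t⟩) H.edgeFinset
end

section
/- Let H, F, J be graphs, let k, ℓ be positive integers with ℓ ≥ k, and let W be a graphon. If t_H(W) ≥ t_J(W)^ℓ / t_F(W)^{k-1} and t_H(1-W) ≥ t_J(1-W)^ℓ / t_F(1-W)^{k-1}, then m_H(W) ≥ 2^{k-ℓ} · m_J(W)^ℓ / m_F(W)^{k-1}. -/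
/-!
Writing `p = ℓ / k ≥ 1`, Radon's inequality (Hölder, or Jensen for `z ↦ z ^ k`) applied to
`a ^ p, b ^ p` gives `a ^ ℓ / c ^ (k-1) + b ^ ℓ / d ^ (k-1) ≥ (a ^ p + b ^ p) ^ k / (c + d) ^ (k-1)`,
and convexity of `z ↦ z ^ p` gives `a ^ p + b ^ p ≥ 2 ^ (1 - p) (a + b) ^ p`. Take
`a, b, c, d` to be the densities of `J` and `F` in `W` and `1 - W`.
-/

open MeasureTheory

open Finset in
theorem Finset.pow_sum_div_pow_sum_le_sum_pow_div_pow {ι : Type*} (s : Finset ι) (k : ℕ)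
    {x c : ι → ℝ} (hx : ∀ i ∈ s, 0 ≤ x i) (hc : ∀ i ∈ s, 0 < c i) :
    (∑ i ∈ s, x i) ^ (k + 1) / (∑ i ∈ s, c i) ^ k ≤ ∑ i ∈ s, x i ^ (k + 1) / c i ^ k := by
  rcases s.eq_empty_or_nonempty with rfl | hs
  · simp
  have hC : 0 < ∑ i ∈ s, c i := sum_pos hc hs
  -- Jensen for `z ↦ z ^ (k + 1)` at the points `x i / c i` with weights `c i / ∑ c`
  have jensen := Real.pow_arith_mean_le_arith_mean_pow s (fun i => c i / ∑ j ∈ s, c j)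
    (fun i => x i / c i) (fun i hi => (div_pos (hc i hi) hC).le)
    (by rw [← sum_div, div_self hC.ne']) (fun i hi => div_nonneg (hx i hi) (hc i hi).le) (k + 1)
  have hmean : ∑ i ∈ s, c i / (∑ j ∈ s, c j) * (x i / c i) = (∑ i ∈ s, x i) / ∑ i ∈ s, c i := by
    rw [sum_div]
    exact sum_congr rfl fun i hi => by field_simp [(hc i hi).ne']
  have hterm : ∀ i ∈ s, c i / (∑ j ∈ s, c j) * (x i / c i) ^ (k + 1) =
      x i ^ (k + 1) / c i ^ k / ∑ j ∈ s, c j := fun i hi => by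
    have := (hc i hi).ne'
    rw [div_pow, pow_succ (c i) k]
    field_simp
  rw [hmean, sum_congr rfl hterm, ← sum_div, div_pow, pow_succ (∑ i ∈ s, c i) k] at jensen
  rwa [div_mul_eq_div_div, div_le_div_iff_of_pos_right hC] at jensen

theorem Real.rpow_add_le_mul_rpow_add_rpow {a b p : ℝ} (ha : 0 ≤ a) (hb : 0 ≤ b) (hp : 1 ≤ p) :
    (a + b) ^ p ≤ 2 ^ (p - 1) * (a ^ p + b ^ p) := by
  lift a to NNReal using ha
  lift b to NNReal using hb
  exact_mod_cast NNReal.rpow_add_le_mul_rpow_add_rpow a b hp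

theorem two_zpow_mul_add_pow_div_le_add_pow_div {a b c d : ℝ} (ha : 0 ≤ a) (hb : 0 ≤ b)
    (hc : 0 < c) (hd : 0 < d) {k ℓ : ℕ} (hk : 1 ≤ k) (hkl : k ≤ ℓ) :
    (2 : ℝ) ^ ((k : ℤ) - ℓ) * (a + b) ^ ℓ / (c + d) ^ (k - 1) ≤
      a ^ ℓ / c ^ (k - 1) + b ^ ℓ / d ^ (k - 1) := by
  obtain ⟨m, rfl⟩ : ∃ m, k = m + 1 := ⟨k - 1, by omega⟩
  rw [Nat.add_sub_cancel]
  set p : ℝ := ℓ / (m + 1) with hp_def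
  have hm : (0 : ℝ) < m + 1 := by positivity
  have hp : 1 ≤ p := by
    rw [hp_def, le_div_iff₀ hm, one_mul]
    exact_mod_cast hkl
  have pow_rpow : ∀ z : ℝ, 0 ≤ z → (z ^ p) ^ (m + 1) = z ^ ℓ := fun z hz => by
    rw [← Real.rpow_natCast, ← Real.rpow_mul hz, hp_def, Nat.cast_add_one,
      div_mul_cancel₀ _ hm.ne', Real.rpow_natCast]
  have power_mean : (2 : ℝ) ^ (1 - p) * (a + b) ^ p ≤ a ^ p + b ^ p := by
    rw [← le_div_iff₀' (by positivity), div_eq_inv_mul, ← Real.rpow_neg zero_le_two, neg_sub]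
    exact Real.rpow_add_le_mul_rpow_add_rpow ha hb hp
  have radon := Finset.univ.pow_sum_div_pow_sum_le_sum_pow_div_pow m (x := ![a ^ p, b ^ p])
    (c := ![c, d]) (by simp [Fin.forall_fin_two, Real.rpow_nonneg, ha, hb])
    (by simp [Fin.forall_fin_two, hc, hd])
  simp only [Fin.sum_univ_two, Matrix.cons_val_zero, Matrix.cons_val_one] at radon
  have two_pow : ((2 : ℝ) ^ (1 - p)) ^ (m + 1) = 2 ^ (((m + 1 : ℕ) : ℤ) - ℓ) := by
    rw [← Real.rpow_natCast, ← Real.rpow_mul zero_le_two, ← Real.rpow_intCast]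
    congr 1
    rw [hp_def]
    field_simp
    push_cast
    ring
  calc (2 : ℝ) ^ (((m + 1 : ℕ) : ℤ) - ℓ) * (a + b) ^ ℓ / (c + d) ^ m
      = (2 ^ (1 - p) * (a + b) ^ p) ^ (m + 1) / (c + d) ^ m := by
        rw [mul_pow, two_pow, pow_rpow _ (add_nonneg ha hb)]
    _ ≤ (a ^ p + b ^ p) ^ (m + 1) / (c + d) ^ m := by gcongr
    _ ≤ _ := radon
    _ = a ^ ℓ / c ^ m + b ^ ℓ / d ^ m := by rw [pow_rpow a ha, pow_rpow b hb]

lemma homDensity_nonneg {V : Type*} [Fintype V] [DecidableEq V]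
    (G : SimpleGraph V) {W : unitInterval → unitInterval → ℝ}
    (hW : ∀ x y, 0 ≤ W x y) : 0 ≤ homDensity G W := by
  refine integral_nonneg fun x => Finset.prod_nonneg fun e _ => ?_
  induction e using Sym2.inductionOn with
  | hf u v =>
    rw [Sym2.lift_mk]
    have := hW (x u) (x v)
    have := hW (x v) (x u)
    positivity

lemma compl'_nonneg {W : unitInterval → unitInterval → ℝ} (hW : ∀ x y, W x y ≤ 1)
    (x y : unitInterval) :
    0 ≤ compl' W x y :=
  sub_nonneg.2 (hW x y)

/-- Lemma 2.3: if `t_H(W) ≥ t_J(W)^ℓ / t_F(W)^{k-1}` and the same inequality holds for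
`1 - W`, then `m_H(W) ≥ 2^{k-ℓ} · m_J(W)^ℓ / m_F(W)^{k-1}`. -/
theorem holder_density_lemma {VH VF VJ : Type*}
    [Fintype VH] [DecidableEq VH] [Fintype VF] [DecidableEq VF]
    [Fintype VJ] [DecidableEq VJ]
    (H : SimpleGraph VH) (F : SimpleGraph VF) (J : SimpleGraph VJ)
    (k ℓ : ℕ) (hk : 1 ≤ k) (hkl : k ≤ ℓ)
    (W : unitInterval → unitInterval → ℝ) (hW : IsGraphon W)
    (hFpos : 0 < homDensity F W) (hFpos' : 0 < homDensity F (compl' W))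
    (h1 : homDensity J W ^ ℓ / homDensity F W ^ (k - 1) ≤ homDensity H W)
    (h2 : homDensity J (compl' W) ^ ℓ / homDensity F (compl' W) ^ (k - 1) ≤
      homDensity H (compl' W)) :
    (2 : ℝ) ^ ((k : ℤ) - ℓ) *
        (homDensity J W + homDensity J (compl' W)) ^ ℓ /
        (homDensity F W + homDensity F (compl' W)) ^ (k - 1) ≤
      homDensity H W + homDensity H (compl' W) := by
  have hJ := homDensity_nonneg J hW.2.2.1
  have hJ' := homDensity_nonneg J (compl'_nonneg hW.2.2.2)
  exact (two_zpow_mul_add_pow_div_le_add_pow_div hJ hJ' hFpos hFpos' hk hkl).trans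
    (add_le_add h1 h2)
end

section
/- Let H be a triangle-tree with triangle-decomposition (F, T). Then |F| = e(H) - v(H) + 1, and the number of edges XY of the tree T for which H[X ∩ Y] is a single edge equals 2e(H) - 3v(H) + 3. In particular, 2e(H) - 3v(H) + 3 ≤ e(H) - v(H). -/
/-!
Double counting over the tree of bags. For a vertex `v`, or an edge `uw`, of `H`, the bags
containing it span a subtree of `𝒯`, so they outnumber the tree edges `XY` with `v ∈ X ∩ Y`
(resp. `uw ⊆ X ∩ Y`) by exactly one. Summing over all vertices and over all edges gives
`3|𝓕| = Σ_{XY} |X ∩ Y| + v(H) = (|𝓕| - 1) + k + v(H)` and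
`3|𝓕| = Σ_{XY} e(H[X ∩ Y]) + e(H) = k + e(H)`, where `k` counts the tree edges with
`|X ∩ Y| = 2`. Solving these two equations gives both formulas, and `k ≤ |𝓕| - 1` gives the
inequality.
-/

open Finset SimpleGraph

lemma Finset.sym2_inter {α : Type*} [DecidableEq α] (s t : Finset α) :
    (s ∩ t).sym2 = s.sym2 ∩ t.sym2 := by
  ext m
  simp only [mem_inter, mem_sym2_iff, imp_and, forall_and]

lemma sum_eq_card_add_card_filter_eq_two {ι : Type*} (s : Finset ι) (f : ι → ℕ)
    (hf : ∀ i ∈ s, f i = 1 ∨ f i = 2) : ∑ i ∈ s, f i = #s + #{i ∈ s | f i = 2} := by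
  rw [card_filter, card_eq_sum_ones, ← sum_add_distrib]
  exact sum_congr rfl fun i hi => by rcases hf i hi with h | h <;> simp [h]

lemma sum_choose_two_eq_card_filter_eq_two {ι : Type*} (s : Finset ι) (f : ι → ℕ)
    (hf : ∀ i ∈ s, f i = 1 ∨ f i = 2) : ∑ i ∈ s, (f i).choose 2 = #{i ∈ s | f i = 2} := by
  rw [card_filter]
  exact sum_congr rfl fun i hi => by rcases hf i hi with h | h <;> simp [h]

def bagInter {β α : Type*} [DecidableEq α] (bag : β → Finset α) : Sym2 β → Finset α :=
  Sym2.lift ⟨fun X Y => bag X ∩ bag Y, fun _ _ => inter_comm _ _⟩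

section BagInter

variable {β α : Type*} [DecidableEq α] (bag : β → Finset α)

@[simp] lemma bagInter_mk (X Y : β) : bagInter bag s(X, Y) = bag X ∩ bag Y := rfl

lemma mem_bagInter {a : α} {e : Sym2 β} : a ∈ bagInter bag e ↔ ∀ X ∈ e, a ∈ bag X := by
  induction e using Sym2.ind
  simp

lemma bagInter_sym2 (e : Sym2 β) :
    bagInter (fun X => (bag X).sym2) e = (bagInter bag e).sym2 := by
  ext h
  simp only [mem_bagInter, mem_sym2_iff]
  tauto

lemma lift_card_inter_eq_card_bagInter
    (h : ∀ X Y : β, #(bag X ∩ bag Y) = #(bag Y ∩ bag X)) (e : Sym2 β) :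
    Sym2.lift ⟨fun X Y => #(bag X ∩ bag Y), h⟩ e = #(bagInter bag e) := by
  induction e using Sym2.ind
  rfl

end BagInter

namespace SimpleGraph

variable {β : Type*} {T : SimpleGraph β}

lemma IsTree.induce_of_isPath_support_subset (hT : T.IsTree) {s : Set β} (hs : s.Nonempty)
    (hconv : ∀ x ∈ s, ∀ y ∈ s, ∀ p : T.Walk x y, p.IsPath → ∀ z ∈ p.support, z ∈ s) :
    (T.induce s).IsTree where
  connected := by
    have : Nonempty s := hs.to_subtype
    refine Connected.mk fun ⟨x, hx⟩ ⟨y, hy⟩ => ?_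
    obtain ⟨p, hp, -⟩ := hT.existsUnique_path x y
    exact ⟨p.induce s (hconv x hx y hy p hp)⟩
  isAcyclic := hT.isAcyclic.induce s

lemma ncard_setOf_lift_card_inter_eq {α : Type*} [DecidableEq α] [Fintype T.edgeSet]
    (bag : β → Finset α) (h : ∀ X Y : β, #(bag X ∩ bag Y) = #(bag Y ∩ bag X)) (n : ℕ) :
    {e ∈ T.edgeSet | Sym2.lift ⟨fun X Y => #(bag X ∩ bag Y), h⟩ e = n}.ncard =
      #{e ∈ T.edgeFinset | #(bagInter bag e) = n} := by
  rw [← Set.ncard_coe_finset, coe_filter]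
  simp only [mem_edgeFinset, lift_card_inter_eq_card_bagInter]

variable [Fintype β] [DecidableEq β]

lemma card_edgeFinset_inter_sym2 [DecidableRel T.Adj] (s : Finset β) :
    #(T.edgeFinset ∩ s.sym2) = #(T.induce s).edgeFinset := by
  rw [← card_map (Function.Embedding.subtype (· ∈ (s : Set β))).sym2Map]
  convert congrArg card (map_edgeFinset_induce (G := T) (s := (s : Set β))).symm using 3
  · simp
  · ext; simp

lemma card_edgeFinset_inter_sym2_of_isClique [DecidableRel T.Adj] {s : Finset β}
    (hs : T.IsClique (s : Set β)) : #(T.edgeFinset ∩ s.sym2) = (#s).choose 2 := by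
  rw [card_edgeFinset_inter_sym2, ← Fintype.card_coe s]
  convert card_edgeFinset_top_eq_card_choose_two (V := (s : Set β)) using 3
  · exact induce_eq_top.mpr hs
  · simp

lemma IsTree.card_edgeFinset_inter_sym2_add_one [DecidableRel T.Adj] (hT : T.IsTree)
    {s : Finset β} (hs : s.Nonempty)
    (hconv : ∀ x ∈ s, ∀ y ∈ s, ∀ p : T.Walk x y, p.IsPath → ∀ z ∈ p.support, z ∈ s) :
    #(T.edgeFinset ∩ s.sym2) + 1 = #s := by
  rw [card_edgeFinset_inter_sym2, ← Fintype.card_coe s]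
  convert (hT.induce_of_isPath_support_subset (s := ↑s) hs hconv).card_edgeFinset
  simp

variable [DecidableRel T.Adj] {α : Type*} [DecidableEq α] (bag : β → Finset α)

lemma IsTree.card_filter_mem_bag (hT : T.IsTree)
    (hpath : ∀ (X Y Z : β) (p : T.Walk X Y), p.IsPath → Z ∈ p.support → bag X ∩ bag Y ⊆ bag Z)
    {a : α} (ha : ∃ X, a ∈ bag X) :
    #{X | a ∈ bag X} = #{e ∈ T.edgeFinset | a ∈ bagInter bag e} + 1 := by
  have hedges : T.edgeFinset ∩ ({X | a ∈ bag X} : Finset β).sym2 =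
      {e ∈ T.edgeFinset | a ∈ bagInter bag e} := by
    ext e
    simp [mem_bagInter]
  rw [← hedges, hT.card_edgeFinset_inter_sym2_add_one]
  · simpa [filter_nonempty_iff] using ha
  · simp only [mem_filter, mem_univ, true_and]
    exact fun X hX Y hY p hp Z hZ => hpath X Y Z p hp hZ (mem_inter.2 ⟨hX, hY⟩)

lemma IsTree.sum_card_inter_bag (hT : T.IsTree)
    (hpath : ∀ (X Y Z : β) (p : T.Walk X Y), p.IsPath → Z ∈ p.support → bag X ∩ bag Y ⊆ bag Z)
    (S : Finset α) (hcover : ∀ a ∈ S, ∃ X, a ∈ bag X) :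
    ∑ X, #(S ∩ bag X) = ∑ e ∈ T.edgeFinset, #(S ∩ bagInter bag e) + #S := by
  calc ∑ X, #(S ∩ bag X)
      = ∑ a ∈ S, #{X | a ∈ bag X} := by
        simp_rw [← filter_mem_eq_inter, card_filter]
        exact sum_comm
    _ = ∑ a ∈ S, (#{e ∈ T.edgeFinset | a ∈ bagInter bag e} + 1) :=
        sum_congr rfl fun a ha => hT.card_filter_mem_bag bag hpath (hcover a ha)
    _ = ∑ e ∈ T.edgeFinset, #(S ∩ bagInter bag e) + #S := by
        rw [sum_add_distrib, sum_const, smul_eq_mul, mul_one]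
        congr 1
        simp_rw [← filter_mem_eq_inter, card_filter]
        exact sum_comm

lemma IsTree.sum_card_bag [Fintype α] (hT : T.IsTree)
    (hpath : ∀ (X Y Z : β) (p : T.Walk X Y), p.IsPath → Z ∈ p.support → bag X ∩ bag Y ⊆ bag Z)
    (hcover : ∀ a, ∃ X, a ∈ bag X) :
    ∑ X, #(bag X) = ∑ e ∈ T.edgeFinset, #(bagInter bag e) + Fintype.card α := by
  simpa using hT.sum_card_inter_bag bag hpath univ fun a _ => hcover a

lemma IsTree.sum_card_edgeFinset_inter_sym2_bag [Fintype α] (hT : T.IsTree)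
    (hpath : ∀ (X Y Z : β) (p : T.Walk X Y), p.IsPath → Z ∈ p.support → bag X ∩ bag Y ⊆ bag Z)
    (H : SimpleGraph α) [DecidableRel H.Adj]
    (hedge : ∀ u v, H.Adj u v → ∃ X, u ∈ bag X ∧ v ∈ bag X) :
    ∑ X, #(H.edgeFinset ∩ (bag X).sym2) =
      ∑ e ∈ T.edgeFinset, #(H.edgeFinset ∩ (bagInter bag e).sym2) + #H.edgeFinset := by
  simp_rw [← bagInter_sym2]
  refine hT.sum_card_inter_bag _ (fun X Y Z p hp hZ => ?_) _ fun e he => ?_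
  · rw [← sym2_inter]
    exact sym2_mono (hpath X Y Z p hp hZ)
  · induction e using Sym2.ind with
    | _ u v =>
      obtain ⟨X, hu, hv⟩ := hedge u v (by simpa using he)
      exact ⟨X, mk_mem_sym2_iff.2 ⟨hu, hv⟩⟩

end SimpleGraph

/-- Lemma 3.2: if `H` is a triangle-tree with triangle-decomposition `(𝓕, 𝒯)` — i.e.
`(𝓕, 𝒯)` is a tree-decomposition of `H` all of whose bags induce triangles, where
adjacent bags share a vertex or an edge — then `|𝓕| = e(H) - v(H) + 1`, the number of
tree edges `XY` for which `H[X ∩ Y]` is a single edge equals `2e(H) - 3v(H) + 3`, and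
in particular `2e(H) - 3v(H) + 3 ≤ e(H) - v(H)`. -/
theorem triangleTree_counts {V : Type*} [Fintype V] [DecidableEq V]
    (H : SimpleGraph V) [DecidableRel H.Adj]
    (𝓕 : Finset (Finset V)) (𝒯 : SimpleGraph {X // X ∈ 𝓕})
    -- `𝒯` is a tree on the family of bags `𝓕`
    (htree : 𝒯.IsTree)
    -- the bags cover all vertices
    (hcover : ∀ v : V, ∃ X ∈ 𝓕, v ∈ X)
    -- every edge of `H` is contained in a bag
    (hedge : ∀ u v : V, H.Adj u v → ∃ X ∈ 𝓕, u ∈ X ∧ v ∈ X)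
    -- if `Z` lies on the path from `X` to `Y` in `𝒯`, then `X ∩ Y ⊆ Z`
    (hpath : ∀ (X Y Z : {X // X ∈ 𝓕}) (p : 𝒯.Walk X Y), p.IsPath → Z ∈ p.support →
      (X : Finset V) ∩ (Y : Finset V) ⊆ (Z : Finset V))
    -- every bag induces a triangle in `H`
    (htri : ∀ X ∈ 𝓕, X.card = 3 ∧ ∀ a ∈ X, ∀ b ∈ X, a ≠ b → H.Adj a b)
    -- adjacent bags share a vertex or an edge
    (hglue : ∀ X Y : {X // X ∈ 𝓕}, 𝒯.Adj X Y →
      ((X : Finset V) ∩ (Y : Finset V)).card = 1 ∨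
        ((X : Finset V) ∩ (Y : Finset V)).card = 2) :
    (𝓕.card : ℤ) = (H.edgeFinset.card : ℤ) - Fintype.card V + 1 ∧
    ({e ∈ 𝒯.edgeSet |
        Sym2.lift ⟨fun (X Y : {X // X ∈ 𝓕}) => ((X : Finset V) ∩ (Y : Finset V)).card,
          fun X Y => by simp [Finset.inter_comm]⟩ e = 2}.ncard : ℤ) =
      2 * (H.edgeFinset.card : ℤ) - 3 * Fintype.card V + 3 ∧
    2 * (H.edgeFinset.card : ℤ) - 3 * Fintype.card V + 3 ≤
      (H.edgeFinset.card : ℤ) - Fintype.card V := by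
  classical
  have hbag : ∀ X : {X // X ∈ 𝓕}, #(X : Finset V) = 3 ∧ H.IsClique (X : Set V) :=
    fun X => ⟨(htri X X.2).1, fun a ha b hb => (htri X X.2).2 a ha b hb⟩
  have hinter : ∀ e ∈ 𝒯.edgeFinset, (#(bagInter Subtype.val e) = 1 ∨
      #(bagInter Subtype.val e) = 2) ∧ H.IsClique (bagInter Subtype.val e : Set V) := by
    intro e he
    induction e using Sym2.ind with
    | _ X Y =>
      exact ⟨hglue X Y ((𝒯.mem_edgeSet).1 (mem_edgeFinset.1 he)),
        (hbag X).2.subset (coe_subset.2 inter_subset_left)⟩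
  have hvert := htree.sum_card_bag Subtype.val hpath fun v => by simpa using hcover v
  have hedges := htree.sum_card_edgeFinset_inter_sym2_bag Subtype.val hpath H
    fun u v huv => by
      obtain ⟨X, hX, hu, hv⟩ := hedge u v huv
      exact ⟨⟨X, hX⟩, hu, hv⟩
  rw [sum_eq_card_add_card_filter_eq_two _ _ fun e he => (hinter e he).1] at hvert
  rw [sum_congr rfl fun e he => card_edgeFinset_inter_sym2_of_isClique (hinter e he).2,
    sum_choose_two_eq_card_filter_eq_two _ _ fun e he => (hinter e he).1,
    sum_congr rfl fun X _ => card_edgeFinset_inter_sym2_of_isClique (hbag X).2] at hedges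
  simp only [hbag, show Nat.choose 3 2 = 3 from rfl, sum_const, card_univ, Fintype.card_coe,
    smul_eq_mul] at hvert hedges
  have htreeEdges : #𝒯.edgeFinset + 1 = #𝓕 := by rw [htree.card_edgeFinset, Fintype.card_coe]
  have hle := card_filter_le 𝒯.edgeFinset fun e => #(bagInter Subtype.val e) = 2
  rw [ncard_setOf_lift_card_inter_eq]
  refine ⟨?_, ?_, ?_⟩ <;> omega
end

section
/- For every graphon W, m_{K_{1,2}}(W) = (2/3)·m_{K_3}(W) + 1/3 ≤ (2/3)·sqrt(m_D(W)) + 1/3, where D is the diamond graph K_{1,1,2}. -/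
open MeasureTheory

/-!
Write `d x = ∫ y, W x y` for the degree and `k x y = ∫ z, W x z * W y z` for the codegree
function of `W`. Then `t(K₂) = ∫ d`, `t(K_{1,2}) = ∫ d²`, `t(K₃) = ∫∫ W k` and `t(D) = ∫∫ W k²`,
and passing to `1 - W` replaces `d x` by `1 - d x` and `k x y` by `1 - d x - d y + k x y`.
Expanding gives Goodman's identity `t(K₃; W) + t(K₃; 1 - W) = 1 - 3 ∫ d + 3 ∫ d²`, and likewise
`t(K_{1,2}; W) + t(K_{1,2}; 1 - W) = 1 - 2 ∫ d + 2 ∫ d²`; the equality is a combination of the two.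
For the inequality, Cauchy–Schwarz with weight `W` gives `t(K₃)² ≤ t(K₂) t(D)` for `W` and for
`1 - W`; as the two edge densities add up to `1`, Cauchy–Schwarz in `ℝ²` then bounds
`t(K₃; W) + t(K₃; 1 - W)` by `√(t(D; W) + t(D; 1 - W))`.
-/

open Function
open scoped unitInterval

section Integration

variable {α E : Type*} [MeasureSpace α] [NormedAddCommGroup E] [NormedSpace ℝ E]

theorem integral_fin_one (g : α → E) : ∫ y : Fin 1 → α, g (y 0) = ∫ a, g a :=
  (volume_preserving_funUnique (Fin 1) α).integral_comp' g

theorem integral_fin_two [SigmaFinite (volume : Measure α)] (g : α → α → E) :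
    ∫ y : Fin 2 → α, g (y 0) (y 1) = ∫ p : α × α, g p.1 p.2 :=
  (volume_preserving_finTwoArrow α).integral_comp' (uncurry g)

theorem integral_fin_add_two [SigmaFinite (volume : Measure α)] {n : ℕ}
    {f : (Fin (n + 2) → α) → E} (hf : Integrable f) :
    ∫ x, f x = ∫ p : α × α, ∫ y : Fin n → α, f (Fin.cons p.1 (Fin.cons p.2 y)) := by
  have hcons₁ := (volume_preserving_piFinSuccAbove (fun _ : Fin (n + 1) => α) 0).symm
  have hcons₂ := (volume_preserving_piFinSuccAbove (fun _ : Fin (n + 2) => α) 0).symm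
  have hassoc : MeasurePreserving (MeasurableEquiv.prodAssoc : (α × α) × (Fin n → α) ≃ᵐ _)
      volume volume := ⟨MeasurableEquiv.measurable _, Measure.prodAssoc_prod⟩
  let e : (α × α) × (Fin n → α) ≃ᵐ (Fin (n + 2) → α) :=
    MeasurableEquiv.prodAssoc.trans (((MeasurableEquiv.refl α).prodCongr
      (MeasurableEquiv.piFinSuccAbove (fun _ => α) 0).symm).trans
      (MeasurableEquiv.piFinSuccAbove (fun _ => α) 0).symm)
  have he : MeasurePreserving e volume volume :=
    (hcons₂.comp ((MeasurePreserving.id volume).prod hcons₁)).comp hassoc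
  rw [← he.integral_comp']
  refine (integral_prod _ ((he.integrable_comp_emb e.measurableEmbedding).2 hf)).trans ?_
  simp [e, Fin.insertNthEquiv, Fin.insertNth_zero', MeasurableEquiv.prodCongr,
    MeasurableEquiv.prodAssoc]

end Integration

section ProbabilitySpace

variable {Ω : Type*} [MeasurableSpace Ω] {μ : Measure Ω}

theorem MeasureTheory.Integrable.of_mem_unitInterval [IsFiniteMeasure μ] {f : Ω → ℝ}
    (hf : Measurable f) (h : ∀ x, f x ∈ I) : Integrable f μ :=
  .of_mem_Icc 0 1 hf.aemeasurable (ae_of_all _ h)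

theorem integral_mem_unitInterval [IsProbabilityMeasure μ] {f : Ω → ℝ} (h : ∀ x, f x ∈ I) :
    ∫ x, f x ∂μ ∈ I := by
  refine ⟨integral_nonneg fun x => (h x).1, ?_⟩
  have := norm_integral_le_of_norm_le_const (μ := μ) (C := 1) (ae_of_all _ fun x => by
    rw [Real.norm_of_nonneg (h x).1]; exact (h x).2)
  simpa using (le_abs_self _).trans this

theorem sq_integral_mul_le {F G : Ω → ℝ} (hF : ∀ x, 0 ≤ F x) (hF_int : Integrable F μ)
    (hFG : Integrable (fun x => F x * G x) μ) (hFG2 : Integrable (fun x => F x * G x ^ 2) μ) :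
    (∫ x, F x * G x ∂μ) ^ 2 ≤ (∫ x, F x ∂μ) * ∫ x, F x * G x ^ 2 ∂μ := by
  have hquad : ∀ t : ℝ, 0 ≤ (∫ x, F x * G x ^ 2 ∂μ) * (t * t) + (-2 * ∫ x, F x * G x ∂μ) * t
      + ∫ x, F x ∂μ := by
    intro t
    have hexp : ∫ x, F x * (t * G x - 1) ^ 2 ∂μ
        = (∫ x, F x * G x ^ 2 ∂μ) * (t * t) + (-2 * ∫ x, F x * G x ∂μ) * t + ∫ x, F x ∂μ := by
      simp_rw [show ∀ x, F x * (t * G x - 1) ^ 2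
        = t * t * (F x * G x ^ 2) - 2 * t * (F x * G x) + F x from fun x => by ring]
      rw [integral_add (by fun_prop) hF_int, integral_sub (by fun_prop) (by fun_prop),
        integral_const_mul, integral_const_mul]
      ring
    exact hexp ▸ integral_nonneg fun x => mul_nonneg (hF x) (sq_nonneg _)
  have := discrim_le_zero hquad
  rw [discrim] at this
  linarith

end ProbabilitySpace

theorem add_le_sqrt_add_of_sq_le_mul {a b x y A B : ℝ} (hx : 0 ≤ x) (hy : 0 ≤ y)
    (hxy : x + y = 1) (hA : 0 ≤ A) (hB : 0 ≤ B) (ha : a ^ 2 ≤ x * A) (hb : b ^ 2 ≤ y * B) :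
    a + b ≤ √(A + B) := by
  have ha' : a ≤ √x * √A := by rw [← Real.sqrt_mul hx]; exact Real.le_sqrt_of_sq_le ha
  have hb' : b ≤ √y * √B := by rw [← Real.sqrt_mul hy]; exact Real.le_sqrt_of_sq_le hb
  have hcs : √x * √A + √y * √B ≤ √(A + B) := by
    apply Real.le_sqrt_of_sq_le
    nlinarith [sq_nonneg (√x * √B - √y * √A), Real.sq_sqrt hx, Real.sq_sqrt hy,
      Real.sq_sqrt hA, Real.sq_sqrt hB]
  linarith

namespace Graphon

noncomputable def degree (W : I → I → ℝ) (x : I) : ℝ := ∫ y, W x y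

noncomputable def codegree (W : I → I → ℝ) (x y : I) : ℝ := ∫ z, W x z * W y z

end Graphon

open Graphon

namespace IsGraphon

variable {W : I → I → ℝ}

theorem mem_unitInterval (hW : IsGraphon W) (x y : I) : W x y ∈ I :=
  ⟨hW.2.2.1 x y, hW.2.2.2 x y⟩

theorem compl (hW : IsGraphon W) : IsGraphon (compl' W) :=
  ⟨measurable_const.sub hW.1, fun x y => congrArg (1 - ·) (hW.2.1 x y),
    fun x y => sub_nonneg.2 (hW.2.2.2 x y), fun x y => sub_le_self _ (hW.2.2.1 x y)⟩

theorem integrable_section (hW : IsGraphon W) (x : I) : Integrable (W x) :=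
  .of_mem_unitInterval (hW.1.comp measurable_prodMk_left) (hW.mem_unitInterval x)

theorem degree_mem (hW : IsGraphon W) (x : I) : degree W x ∈ I :=
  integral_mem_unitInterval (hW.mem_unitInterval x)

theorem codegree_mem (hW : IsGraphon W) (x y : I) : codegree W x y ∈ I :=
  integral_mem_unitInterval fun z =>
    unitInterval.mul_mem (hW.mem_unitInterval x z) (hW.mem_unitInterval y z)

theorem measurable_degree (hW : IsGraphon W) : Measurable (degree W) :=
  hW.1.stronglyMeasurable.integral_prod_right.measurable

theorem measurable_codegree (hW : IsGraphon W) :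
    Measurable fun p : I × I => codegree W p.1 p.2 := by
  have hWm := hW.1
  exact (StronglyMeasurable.integral_prod_right'
    (f := fun q : (I × I) × I => W q.1.1 q.2 * W q.1.2 q.2)
    (by fun_prop : Measurable _).stronglyMeasurable).measurable

theorem integral_apply_left (hW : IsGraphon W) (y : I) : ∫ x, W x y = degree W y := by
  simp_rw [hW.2.1 _ y]; rfl

theorem degree_compl (hW : IsGraphon W) (x : I) : degree (compl' W) x = 1 - degree W x := by
  simp only [degree, compl']
  rw [integral_sub (integrable_const 1) (hW.integrable_section x)]
  simp

theorem codegree_compl (hW : IsGraphon W) (x y : I) :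
    codegree (compl' W) x y = 1 - degree W x - degree W y + codegree W x y := by
  have hx := hW.integrable_section x
  have hy := hW.integrable_section y
  have hWm := hW.1
  have hxy : Integrable fun z => W x z * W y z :=
    .of_mem_unitInterval (by fun_prop)
      fun z => unitInterval.mul_mem (hW.mem_unitInterval x z) (hW.mem_unitInterval y z)
  simp_rw [codegree, compl', show ∀ z, (1 - W x z) * (1 - W y z)
    = 1 - W x z - W y z + W x z * W y z from fun z => by ring]
  rw [integral_add (by fun_prop) hxy, integral_sub (by fun_prop) hy,
    integral_sub (integrable_const 1) hx]
  simp [degree]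

theorem integrable_mul_codegree (hW : IsGraphon W) :
    Integrable fun p : I × I => W p.1 p.2 * codegree W p.1 p.2 :=
  .of_mem_unitInterval (hW.1.mul hW.measurable_codegree) fun _ =>
    unitInterval.mul_mem (hW.mem_unitInterval _ _) (hW.codegree_mem _ _)

theorem tK2_eq_integral_degree (hW : IsGraphon W) : tK2 W = ∫ x, degree W x :=
  (integral_fin_two W).trans
    (integral_prod _ (.of_mem_unitInterval hW.1 fun _ => hW.mem_unitInterval _ _))

theorem integral_degree_fst (hW : IsGraphon W) : ∫ p : I × I, degree W p.1 = tK2 W := by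
  rw [Measure.volume_eq_prod, integral_fun_fst, hW.tK2_eq_integral_degree]
  simp

theorem integral_degree_snd (hW : IsGraphon W) : ∫ p : I × I, degree W p.2 = tK2 W := by
  rw [Measure.volume_eq_prod, integral_fun_snd, hW.tK2_eq_integral_degree]
  simp

theorem tP3_eq_integral_mul_degree (hW : IsGraphon W) :
    tP3 W = ∫ p : I × I, W p.1 p.2 * degree W p.2 := by
  have hWm := hW.1
  rw [tP3, integral_fin_add_two (.of_mem_unitInterval (by fun_prop) fun x =>
    unitInterval.mul_mem (hW.mem_unitInterval _ _) (hW.mem_unitInterval _ _))]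
  refine integral_congr_ae (ae_of_all _ fun p => ?_)
  exact (integral_fin_one (fun c => W p.1 p.2 * W p.2 c)).trans (integral_const_mul _ _)

theorem integral_mul_degree_fst (hW : IsGraphon W) :
    ∫ p : I × I, W p.1 p.2 * degree W p.1 = ∫ x, degree W x ^ 2 := by
  have hWm := hW.1
  have hd := hW.measurable_degree
  rw [Measure.volume_eq_prod, integral_prod _ (.of_mem_unitInterval (by fun_prop) fun p =>
    unitInterval.mul_mem (hW.mem_unitInterval _ _) (hW.degree_mem _))]
  simp_rw [integral_mul_const, sq]
  rfl

theorem tP3_eq_integral_degree_sq (hW : IsGraphon W) : tP3 W = ∫ x, degree W x ^ 2 := by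
  rw [hW.tP3_eq_integral_mul_degree, ← hW.integral_mul_degree_fst, Measure.volume_eq_prod,
    ← integral_prod_swap]
  simp_rw [Prod.fst_swap, Prod.snd_swap, hW.2.1]

theorem integral_codegree (hW : IsGraphon W) :
    ∫ p : I × I, codegree W p.1 p.2 = ∫ x, degree W x ^ 2 := by
  have hWm := hW.1
  have h : Integrable (uncurry fun (p : I × I) z => W p.1 z * W p.2 z) :=
    .of_mem_unitInterval (by fun_prop) fun q =>
      unitInterval.mul_mem (hW.mem_unitInterval _ _) (hW.mem_unitInterval _ _)
  simp_rw [codegree]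
  refine (integral_integral_swap h).trans (integral_congr_ae (ae_of_all _ fun z => ?_))
  dsimp only
  rw [Measure.volume_eq_prod, integral_prod_mul (fun x => W x z) (fun x => W x z),
    hW.integral_apply_left, sq]

theorem tK3_eq_integral_mul_codegree (hW : IsGraphon W) :
    tK3 W = ∫ p : I × I, W p.1 p.2 * codegree W p.1 p.2 := by
  have hWm := hW.1
  rw [tK3, integral_fin_add_two (.of_mem_unitInterval (by fun_prop) fun x =>
    unitInterval.mul_mem (unitInterval.mul_mem (hW.mem_unitInterval _ _)
      (hW.mem_unitInterval _ _)) (hW.mem_unitInterval _ _))]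
  refine integral_congr_ae (ae_of_all _ fun p => ?_)
  refine (integral_fin_one (fun c => W p.1 p.2 * W p.2 c * W c p.1)).trans ?_
  simp_rw [mul_assoc, integral_const_mul, codegree, hW.2.1 _ p.1, mul_comm (W p.2 _)]

theorem tD_eq_integral_mul_codegree_sq (hW : IsGraphon W) :
    tD W = ∫ p : I × I, W p.1 p.2 * codegree W p.1 p.2 ^ 2 := by
  have hWm := hW.1
  rw [tD, integral_fin_add_two (.of_mem_unitInterval (by fun_prop) fun x => by
    apply_rules [unitInterval.mul_mem, hW.mem_unitInterval])]
  refine integral_congr_ae (ae_of_all _ fun p => ?_)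
  refine (integral_fin_two (fun c d =>
    W p.1 p.2 * W p.1 c * W p.1 d * W p.2 c * W p.2 d)).trans ?_
  simp_rw [show ∀ c d, W p.1 p.2 * W p.1 c * W p.1 d * W p.2 c * W p.2 d
    = W p.1 p.2 * ((W p.1 c * W p.2 c) * (W p.1 d * W p.2 d)) from fun c d => by ring]
  rw [integral_const_mul, Measure.volume_eq_prod,
    integral_prod_mul (fun c => W p.1 c * W p.2 c) (fun d => W p.1 d * W p.2 d), sq]
  rfl

theorem tK2_nonneg (hW : IsGraphon W) : 0 ≤ tK2 W :=
  integral_nonneg fun _ => hW.2.2.1 _ _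

theorem tD_nonneg (hW : IsGraphon W) : 0 ≤ tD W :=
  integral_nonneg fun _ => by apply_rules [mul_nonneg, hW.2.2.1]

theorem tK2_add_tK2_compl (hW : IsGraphon W) : tK2 W + tK2 (compl' W) = 1 := by
  have hd : Integrable (degree W) := .of_mem_unitInterval hW.measurable_degree hW.degree_mem
  rw [hW.tK2_eq_integral_degree, hW.compl.tK2_eq_integral_degree]
  simp_rw [hW.degree_compl]
  rw [integral_sub (integrable_const 1) hd]
  simp

theorem tP3_compl (hW : IsGraphon W) : tP3 (compl' W) = 1 - 2 * tK2 W + tP3 W := by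
  have hdm := hW.measurable_degree
  have hd : Integrable (degree W) := .of_mem_unitInterval hdm hW.degree_mem
  have hd2 : Integrable fun x => degree W x ^ 2 := .of_mem_unitInterval (by fun_prop)
    fun x => by simpa [sq] using unitInterval.mul_mem (hW.degree_mem x) (hW.degree_mem x)
  rw [hW.compl.tP3_eq_integral_degree_sq, hW.tK2_eq_integral_degree,
    hW.tP3_eq_integral_degree_sq]
  simp_rw [hW.degree_compl, show ∀ t : ℝ, (1 - t) ^ 2 = 1 - 2 * t + t ^ 2 from fun t => by ring]
  rw [integral_add (by fun_prop) hd2, integral_sub (integrable_const 1) (hd.const_mul 2),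
    integral_const_mul]
  simp

theorem tK3_add_tK3_compl (hW : IsGraphon W) :
    tK3 W + tK3 (compl' W) = 1 - 3 * tK2 W + 3 * tP3 W := by
  have hWm := hW.1
  have hdm := hW.measurable_degree
  have hW_int : Integrable fun p : I × I => W p.1 p.2 :=
    .of_mem_unitInterval hWm fun _ => hW.mem_unitInterval _ _
  have hd₁ : Integrable fun p : I × I => degree W p.1 :=
    .of_mem_unitInterval (by fun_prop) fun _ => hW.degree_mem _
  have hd₂ : Integrable fun p : I × I => degree W p.2 :=
    .of_mem_unitInterval (by fun_prop) fun _ => hW.degree_mem _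
  have hk : Integrable fun p : I × I => codegree W p.1 p.2 :=
    .of_mem_unitInterval hW.measurable_codegree fun _ => hW.codegree_mem _ _
  have hWd₁ : Integrable fun p : I × I => W p.1 p.2 * degree W p.1 :=
    .of_mem_unitInterval (by fun_prop) fun _ =>
      unitInterval.mul_mem (hW.mem_unitInterval _ _) (hW.degree_mem _)
  have hWd₂ : Integrable fun p : I × I => W p.1 p.2 * degree W p.2 :=
    .of_mem_unitInterval (by fun_prop) fun _ =>
      unitInterval.mul_mem (hW.mem_unitInterval _ _) (hW.degree_mem _)
  rw [hW.tK3_eq_integral_mul_codegree, hW.compl.tK3_eq_integral_mul_codegree,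
    ← integral_add hW.integrable_mul_codegree hW.compl.integrable_mul_codegree]
  simp_rw [hW.codegree_compl, compl', show ∀ w d₁ d₂ k : ℝ,
    w * k + (1 - w) * (1 - d₁ - d₂ + k) = 1 - d₁ - d₂ + k - w + w * d₁ + w * d₂ from
    fun _ _ _ _ => by ring]
  rw [integral_add (by fun_prop) hWd₂, integral_add (by fun_prop) hWd₁,
    integral_sub (by fun_prop) hW_int, integral_add (by fun_prop) hk,
    integral_sub (by fun_prop) hd₂, integral_sub (integrable_const 1) hd₁,
    hW.integral_degree_fst, hW.integral_degree_snd, hW.integral_codegree, ← integral_fin_two W,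
    ← tK2, hW.integral_mul_degree_fst, ← hW.tP3_eq_integral_mul_degree,
    ← hW.tP3_eq_integral_degree_sq]
  simp only [integral_const, probReal_univ, smul_eq_mul, mul_one]
  ring

theorem sq_tK3_le_tK2_mul_tD (hW : IsGraphon W) : tK3 W ^ 2 ≤ tK2 W * tD W := by
  have hWm := hW.1
  have hk := hW.measurable_codegree
  rw [hW.tK3_eq_integral_mul_codegree, hW.tD_eq_integral_mul_codegree_sq, tK2,
    integral_fin_two W]
  exact sq_integral_mul_le (fun _ => hW.2.2.1 _ _)
    (.of_mem_unitInterval hWm fun _ => hW.mem_unitInterval _ _) hW.integrable_mul_codegree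
    (.of_mem_unitInterval (by fun_prop) fun _ => by
      rw [sq]; apply_rules [unitInterval.mul_mem, hW.mem_unitInterval, hW.codegree_mem])

end IsGraphon

/-- For every graphon `W`:
`m_{K_{1,2}}(W) = (2/3)·m_{K₃}(W) + 1/3 ≤ (2/3)·√(m_D(W)) + 1/3`. -/
theorem goodman_diamond (W : unitInterval → unitInterval → ℝ) (hW : IsGraphon W) :
    tP3 W + tP3 (compl' W) = 2 / 3 * (tK3 W + tK3 (compl' W)) + 1 / 3 ∧
      tP3 W + tP3 (compl' W) ≤ 2 / 3 * Real.sqrt (tD W + tD (compl' W)) + 1 / 3 := by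
  have hV := hW.compl
  have hP3 := hW.tP3_compl
  have hK3 := hW.tK3_add_tK3_compl
  refine ⟨by linarith, ?_⟩
  have hK3_le : tK3 W + tK3 (compl' W) ≤ √(tD W + tD (compl' W)) :=
    add_le_sqrt_add_of_sq_le_mul hW.tK2_nonneg hV.tK2_nonneg hW.tK2_add_tK2_compl
      hW.tD_nonneg hV.tD_nonneg hW.sq_tK3_le_tK2_mul_tD hV.sq_tK3_le_tK2_mul_tD
  linarith
end

section
/- For every integer k ≥ 2, the function g(x) = x^{4k} / ((2x+1)^{2k-2}·(112x^2 - 5)) is monotone increasing on [1/4, ∞) ∩ {x : 112x^2 > 5}; more precisely, on the interval x ≥ 1/4 where 112x^2 - 5 > 0, the derivative of g has the same sign as 112k·x^3 + (112k-56)·x^2 - (5k+5)·x - 5k, which is positive. -/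
/-! The logarithmic derivative of `g` is `4k/x - 4(k-1)/(2x+1) - 224x/(112x²-5)`, which over
the common denominator `x(2x+1)(112x²-5)` equals `4 p_k(x)`. For `x ≥ 1/4` the function `g` and
this denominator are positive, so `g'` has the sign of `p_k`, and `p_k > 0` there once `k ≥ 2`. -/

open Set

section LogDeriv

variable {𝕜 : Type*} [NontriviallyNormedField 𝕜] {u v w : 𝕜 → 𝕜} {a b c x : 𝕜}

theorem HasDerivAt.div_mul_logDeriv (hu : HasDerivAt u (u x * a) x)
    (hv : HasDerivAt v (v x * b) x) (hw : HasDerivAt w (w x * c) x) (hv0 : v x ≠ 0)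
    (hw0 : w x ≠ 0) :
    HasDerivAt (fun y => u y / (v y * w y)) (u x / (v x * w x) * (a - b - c)) x :=
  (hu.div (hv.mul hw) (mul_ne_zero hv0 hw0)).congr_deriv <| by
    simp only [Pi.mul_apply]; field_simp; ring

theorem hasDerivAt_pow_of_ne_zero (n : ℕ) (hx : x ≠ 0) :
    HasDerivAt (fun y => y ^ n) (x ^ n * (n / x)) x := by
  refine (hasDerivAt_pow n x).congr_deriv ?_
  cases n with
  | zero => simp
  | succ n => rw [Nat.add_sub_cancel, pow_succ]; field_simp

end LogDeriv

noncomputable def beachballRatio (k : ℕ) (x : ℝ) : ℝ :=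
  x ^ (4 * k) / ((2 * x + 1) ^ (2 * k - 2) * (112 * x ^ 2 - 5))

def beachballCubic (k x : ℝ) : ℝ :=
  112 * k * x ^ 3 + (112 * k - 56) * x ^ 2 - (5 * k + 5) * x - 5 * k

theorem beachball_quadratic_pos {x : ℝ} (hx : 1 / 4 ≤ x) : 0 < 112 * x ^ 2 - 5 := by
  nlinarith

theorem beachballCubic_pos {k x : ℝ} (hk : 2 ≤ k) (hx : 1 / 4 ≤ x) :
    0 < beachballCubic k x := by
  unfold beachballCubic
  nlinarith [mul_nonneg (sub_nonneg.2 hk) (sub_nonneg.2 hx),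
    mul_nonneg (sub_nonneg.2 hx) (sub_nonneg.2 hx)]

theorem hasDerivAt_beachballRatio {k : ℕ} (hk : 1 ≤ k) {x : ℝ} (hx : 0 < x)
    (hq : 112 * x ^ 2 - 5 ≠ 0) :
    HasDerivAt (beachballRatio k)
      (beachballRatio k x * (4 * beachballCubic k x / (x * (2 * x + 1) * (112 * x ^ 2 - 5))))
      x := by
  have hlin : 2 * x + 1 ≠ 0 := by positivity
  have hu := hasDerivAt_pow_of_ne_zero (4 * k) hx.ne'
  have hv : HasDerivAt (fun y : ℝ => (2 * y + 1) ^ (2 * k - 2))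
      ((2 * x + 1) ^ (2 * k - 2) * (2 * (2 * k - 2 : ℕ) / (2 * x + 1))) x :=
    ((hasDerivAt_pow_of_ne_zero (2 * k - 2) hlin).comp x
      (((hasDerivAt_id x).const_mul 2).add_const 1)).congr_deriv (by ring)
  have hw : HasDerivAt (fun y : ℝ => 112 * y ^ 2 - 5)
      ((112 * x ^ 2 - 5) * (224 * x / (112 * x ^ 2 - 5))) x :=
    (((hasDerivAt_pow 2 x).const_mul 112).sub_const 5).congr_deriv
      (by rw [mul_div_cancel₀ _ hq]; norm_num; ring)
  refine (hu.div_mul_logDeriv hv hw (pow_ne_zero _ hlin) hq).congr_deriv ?_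
  unfold beachballCubic beachballRatio
  rw [Nat.cast_sub (by omega)]
  -- the form in which `field_simp` looks for the nonvanishing of the quadratic
  have hq' : x ^ 2 * 112 - 5 ≠ 0 := by rwa [mul_comm]
  push_cast
  field_simp
  ring

/-- For `k ≥ 2`, on the interval `x ≥ 1/4` (where `112x² - 5 > 0`), the function
`g(x) = x^{4k} / ((2x+1)^{2k-2}·(112x²-5))` is strictly increasing; more precisely,
its derivative exists and has the same sign as
`p_k(x) = 112k·x³ + (112k-56)·x² - (5k+5)·x - 5k`, which is positive. -/
theorem beachball_mono (k : ℕ) (hk : 2 ≤ k) :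
    (∀ x ∈ Set.Ici (1 / 4 : ℝ), 0 < 112 * x ^ 2 - 5) ∧
    StrictMonoOn (fun x : ℝ => x ^ (4 * k) / ((2 * x + 1) ^ (2 * k - 2) * (112 * x ^ 2 - 5)))
      (Set.Ici (1 / 4 : ℝ)) ∧
    ∀ x ∈ Set.Ici (1 / 4 : ℝ), ∃ d : ℝ,
      HasDerivAt (fun x : ℝ => x ^ (4 * k) / ((2 * x + 1) ^ (2 * k - 2) * (112 * x ^ 2 - 5)))
        d x ∧
      (0 < d ↔ 0 < 112 * k * x ^ 3 + (112 * k - 56) * x ^ 2 - (5 * k + 5) * x - 5 * k) ∧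
      0 < 112 * k * x ^ 3 + (112 * k - 56) * x ^ 2 - (5 * k + 5) * x - 5 * k := by
  set d := fun x : ℝ =>
    beachballRatio k x * (4 * beachballCubic k x / (x * (2 * x + 1) * (112 * x ^ 2 - 5)))
  have hderiv (x : ℝ) (hx : x ∈ Ici (1 / 4)) : HasDerivAt (beachballRatio k) (d x) x :=
    hasDerivAt_beachballRatio (by omega) (by linarith [mem_Ici.1 hx])
      (beachball_quadratic_pos hx).ne'
  have hpos_iff (x : ℝ) (hx : x ∈ Ici (1 / 4)) : 0 < d x ↔ 0 < beachballCubic k x := by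
    have hx0 : 0 < x := by linarith [mem_Ici.1 hx]
    have hq := beachball_quadratic_pos hx
    have hg : 0 < beachballRatio k x := by unfold beachballRatio; positivity
    rw [mul_pos_iff_of_pos_left hg, div_pos_iff_of_pos_right (by positivity),
      mul_pos_iff_of_pos_left four_pos]
  have hcubic (x : ℝ) (hx : x ∈ Ici (1 / 4)) : 0 < beachballCubic k x :=
    beachballCubic_pos (by exact_mod_cast hk) hx
  refine ⟨fun x hx => beachball_quadratic_pos hx, ?_,
    fun x hx => ⟨d x, hderiv x hx, hpos_iff x hx, hcubic x hx⟩⟩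
  refine strictMonoOn_of_hasDerivWithinAt_pos (convex_Ici _)
    (fun x hx => (hderiv x hx).continuousAt.continuousWithinAt)
    (fun x hx => (hderiv x (interior_subset hx)).hasDerivWithinAt) fun x hx => ?_
  exact (hpos_iff x (interior_subset hx)).2 (hcubic x (interior_subset hx))
end

section
/- Let A be a graph and let H be obtained from the connected bipartite graph A by adding a ≥ 1 apex vertices (each new vertex adjacent to all vertices of A and to no other new vertex). If for every graphon W one has t_{A^{+a}}(W) ≥ t_{A^{+1}}(W)^a / t_A(W)^{a-1} and t_{A^{+a}}(1-W) ≥ t_{A^{+1}}(1-W)^a / t_A(1-W)^{a-1}, and moreover m_{A^{+1}}(W) ≥ 2^{-v(A)}·m_A(W) and m_A(W) ≥ 2^{1-e(A)}, then m_{A^{+a}}(W) ≥ 2^{1-e(A)-a·v(A)} = 2^{1-e(A^{+a})}; that is, A^{+a} is common. -/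
open MeasureTheory

/-- The graph `A^{+a}` obtained from `A` by adding `a` apex vertices, each joined to
every vertex of `A` and to no other new vertex. -/
def addApex {V : Type*} (A : SimpleGraph V) (a : ℕ) : SimpleGraph (V ⊕ Fin a) where
  Adj x y :=
    match x, y with
    | Sum.inl u, Sum.inl v => A.Adj u v
    | Sum.inl _, Sum.inr _ => True
    | Sum.inr _, Sum.inl _ => True
    | Sum.inr _, Sum.inr _ => False
  symm := ⟨by
    rintro (u | i) (v | j) h
    · exact A.adj_symm h
    · trivial
    · trivial
    · exact h⟩
  loopless := ⟨by
    rintro (u | i) h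
    · exact A.irrefl h
    · exact h⟩

/-!
Write `z, w` for the densities of `A` in `W` and `1 - W`, and `x, y` for those of `A^{+1}`.
Radon's inequality `(x + y)^a / (z + w)^(a-1) ≤ x^a / z^(a-1) + y^a / w^(a-1)` turns the two
`t`-inequalities into `m_{A^{+a}} ≥ m_{A^{+1}}^a / m_A^(a-1)`, and the bounds on `m_{A^{+1}}`
and `m_A` then give
`m_{A^{+a}} ≥ (2^{-v(A)} m_A)^a / m_A^(a-1) = 2^{-a v(A)} m_A ≥ 2^{1-e(A)-a v(A)}`.
Since deleting the apex vertices can only increase a density, `z = 0` forces `x = 0` (and likewise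
for `w, y`), so the junk value of division by zero in Radon's inequality does no harm.
-/

lemma pow_succ_div_pow_eq_mul_div_pow {x z : ℝ} (hz : z ≠ 0) (n : ℕ) :
    x ^ (n + 1) / z ^ n = z * (x / z) ^ (n + 1) := by
  rw [div_pow, pow_succ' z]
  field_simp

lemma add_pow_succ_div_add_pow_le {x y z w : ℝ} (hx : 0 ≤ x) (hy : 0 ≤ y) (hz : 0 ≤ z)
    (hw : 0 ≤ w) (hxz : z = 0 → x = 0) (hyw : w = 0 → y = 0) (n : ℕ) :
    (x + y) ^ (n + 1) / (z + w) ^ n ≤ x ^ (n + 1) / z ^ n + y ^ (n + 1) / w ^ n := by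
  rcases hz.eq_or_lt with rfl | hz
  · simp [hxz rfl]
  rcases hw.eq_or_lt with rfl | hw
  · simp [hyw rfl]
  have hzw : 0 < z + w := add_pos hz hw
  have hconv := (convexOn_pow (n + 1)).2 (Set.mem_Ici.2 (div_nonneg hx hz.le))
    (Set.mem_Ici.2 (div_nonneg hy hw.le)) (div_nonneg hz.le hzw.le) (div_nonneg hw.le hzw.le)
    (by field_simp)
  have hmean : z / (z + w) * (x / z) + w / (z + w) * (y / w) = (x + y) / (z + w) := by
    field_simp
  simp only [smul_eq_mul, hmean] at hconv
  -- `x^(n+1) / z^n` is the perspective of the convex map `t ↦ t^(n+1)`.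
  rw [pow_succ_div_pow_eq_mul_div_pow hzw.ne', pow_succ_div_pow_eq_mul_div_pow hz.ne',
    pow_succ_div_pow_eq_mul_div_pow hw.ne']
  calc (z + w) * ((x + y) / (z + w)) ^ (n + 1)
      ≤ (z + w) * (z / (z + w) * (x / z) ^ (n + 1) + w / (z + w) * (y / w) ^ (n + 1)) := by
        gcongr
    _ = z * (x / z) ^ (n + 1) + w * (y / w) ^ (n + 1) := by field_simp

section

variable {W : unitInterval → unitInterval → ℝ}

lemma IsGraphon.compl' (hW : IsGraphon W) : IsGraphon (compl' W) := by
  obtain ⟨hmeas, hsymm, hnonneg, hle⟩ := hW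
  exact ⟨measurable_const.sub hmeas, fun x y => by simp only [_root_.compl', hsymm],
    fun x y => sub_nonneg.2 (hle x y), fun x y => sub_le_self _ (hnonneg x y)⟩

section edgeWeight

variable {V : Type*}

noncomputable def edgeWeight (W : unitInterval → unitInterval → ℝ) (x : V → unitInterval) :
    Sym2 V → ℝ :=
  Sym2.lift ⟨fun a b => (W (x a) (x b) + W (x b) (x a)) / 2, fun a b => by ring⟩

@[simp]
lemma edgeWeight_mk (x : V → unitInterval) (u v : V) :
    edgeWeight W x s(u, v) = (W (x u) (x v) + W (x v) (x u)) / 2 := rfl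

lemma edgeWeight_map {U : Type*} (f : V → U) (x : U → unitInterval) (e : Sym2 V) :
    edgeWeight W x (e.map f) = edgeWeight W (x ∘ f) e := by
  induction e using Sym2.ind with
  | _ u v => rfl

lemma edgeWeight_nonneg (hW : ∀ s t, 0 ≤ W s t) (x : V → unitInterval) (e : Sym2 V) :
    0 ≤ edgeWeight W x e := by
  induction e using Sym2.ind with
  | _ u v => simp only [edgeWeight_mk]; linarith [hW (x u) (x v), hW (x v) (x u)]

lemma edgeWeight_le_one (hW : ∀ s t, W s t ≤ 1) (x : V → unitInterval) (e : Sym2 V) :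
    edgeWeight W x e ≤ 1 := by
  induction e using Sym2.ind with
  | _ u v => simp only [edgeWeight_mk]; linarith [hW (x u) (x v), hW (x v) (x u)]

lemma measurable_edgeWeight (hW : Measurable fun p : unitInterval × unitInterval => W p.1 p.2)
    (e : Sym2 V) : Measurable fun x : V → unitInterval => edgeWeight W x e := by
  induction e using Sym2.ind with
  | _ u v =>
    have hW' (i j : V) : Measurable fun x : V → unitInterval => W (x i) (x j) :=
      hW.comp ((measurable_pi_apply i).prodMk (measurable_pi_apply j) :
        Measurable fun x : V → unitInterval => (x i, x j))
    exact ((hW' u v).add (hW' v u)).div_const 2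

lemma integrable_prod_edgeWeight [Fintype V] (hW : IsGraphon W) (s : Finset (Sym2 V)) :
    Integrable fun x : V → unitInterval => ∏ e ∈ s, edgeWeight W x e := by
  refine (integrable_const (1 : ℝ)).mono'
    (Finset.measurable_prod s fun e _ => measurable_edgeWeight hW.1 e).aestronglyMeasurable
    (Filter.Eventually.of_forall fun x => ?_)
  rw [Real.norm_of_nonneg (Finset.prod_nonneg fun e _ => edgeWeight_nonneg hW.2.2.1 x e)]
  exact Finset.prod_le_one (fun e _ => edgeWeight_nonneg hW.2.2.1 x e)
    fun e _ => edgeWeight_le_one hW.2.2.2 x e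

end edgeWeight

lemma measurePreserving_comp_inl (V U α : Type*) [Fintype V] [Fintype U] [MeasureSpace α]
    [IsProbabilityMeasure (volume : Measure α)] :
    MeasurePreserving (fun x : V ⊕ U → α => x ∘ Sum.inl) :=
  measurePreserving_fst.comp (volume_measurePreserving_sumPiEquivProdPi _)

variable {V : Type*} [Fintype V] [DecidableEq V]

lemma homDensity_eq_integral_prod_edgeWeight (G : SimpleGraph V) [DecidableRel G.Adj] :
    homDensity G W = ∫ x : V → unitInterval, ∏ e ∈ G.edgeFinset, edgeWeight W x e := by
  rw [homDensity]
  congr!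

lemma homDensity_nonneg_s18 (G : SimpleGraph V) (hW : ∀ s t, 0 ≤ W s t) : 0 ≤ homDensity G W :=
  integral_nonneg fun x => Finset.prod_nonneg fun e _ => edgeWeight_nonneg hW x e

lemma homDensity_addApex_le (A : SimpleGraph V) (a : ℕ) (hW : IsGraphon W) :
    homDensity (addApex A a) W ≤ homDensity A W := by
  classical
  let inlEdge : Sym2 V ↪ Sym2 (V ⊕ Fin a) :=
    ⟨Sym2.map Sum.inl, Sym2.map.injective Sum.inl_injective⟩
  have hsub : A.edgeFinset.map inlEdge ⊆ (addApex A a).edgeFinset := by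
    simp only [Finset.subset_iff, Finset.mem_map]
    rintro _ ⟨e, he, rfl⟩
    induction e using Sym2.ind with
    | _ u v =>
      rw [SimpleGraph.mem_edgeFinset] at he ⊢
      exact he
  have hpoint (x : V ⊕ Fin a → unitInterval) :
      ∏ e ∈ (addApex A a).edgeFinset, edgeWeight W x e ≤
        ∏ e ∈ A.edgeFinset, edgeWeight W (x ∘ Sum.inl) e := by
    rw [← Finset.prod_sdiff hsub, Finset.prod_map]
    simp only [inlEdge, Function.Embedding.coeFn_mk, edgeWeight_map]
    exact mul_le_of_le_one_left (Finset.prod_nonneg fun e _ => edgeWeight_nonneg hW.2.2.1 _ e)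
      (Finset.prod_le_one (fun e _ => edgeWeight_nonneg hW.2.2.1 x e)
        fun e _ => edgeWeight_le_one hW.2.2.2 x e)
  have hmp := measurePreserving_comp_inl V (Fin a) unitInterval
  rw [homDensity_eq_integral_prod_edgeWeight, homDensity_eq_integral_prod_edgeWeight]
  have hA := integrable_prod_edgeWeight hW A.edgeFinset
  calc _ ≤ ∫ x : V ⊕ Fin a → unitInterval,
          ∏ e ∈ A.edgeFinset, edgeWeight W (x ∘ Sum.inl) e :=
        integral_mono (integrable_prod_edgeWeight hW _)
          ((hmp.map_eq ▸ hA).comp_measurable hmp.measurable) hpoint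
    _ = _ := by
        rw [← hmp.map_eq, integral_map hmp.measurable.aemeasurable (hmp.map_eq ▸ hA.1)]

end

theorem addApex_common_general {V : Type*} [Fintype V] [DecidableEq V]
    (A : SimpleGraph V) [DecidableRel A.Adj]
    (a : ℕ) (ha : 1 ≤ a)
    (W : unitInterval → unitInterval → ℝ) (hW : IsGraphon W)
    (ht1 : homDensity (addApex A 1) W ^ a / homDensity A W ^ (a - 1) ≤
      homDensity (addApex A a) W)
    (ht2 : homDensity (addApex A 1) (compl' W) ^ a / homDensity A (compl' W) ^ (a - 1) ≤
      homDensity (addApex A a) (compl' W))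
    (hm1 : (2 : ℝ) ^ (-(Fintype.card V : ℤ)) *
        (homDensity A W + homDensity A (compl' W)) ≤
      homDensity (addApex A 1) W + homDensity (addApex A 1) (compl' W))
    (hmA : (2 : ℝ) ^ (1 - (A.edgeFinset.card : ℤ)) ≤
      homDensity A W + homDensity A (compl' W)) :
    (2 : ℝ) ^ (1 - (A.edgeFinset.card : ℤ) - a * (Fintype.card V : ℤ)) ≤
      homDensity (addApex A a) W + homDensity (addApex A a) (compl' W) := by
  obtain ⟨n, rfl⟩ := Nat.exists_eq_add_of_le' ha
  rw [Nat.add_sub_cancel] at ht1 ht2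
  have hW' := hW.compl'
  set x := homDensity (addApex A 1) W
  set y := homDensity (addApex A 1) (compl' W)
  set z := homDensity A W
  set w := homDensity A (compl' W)
  set c : ℝ := (2 : ℝ) ^ (-(Fintype.card V : ℤ)) with hc
  have hx : 0 ≤ x := homDensity_nonneg_s18 _ hW.2.2.1
  have hy : 0 ≤ y := homDensity_nonneg_s18 _ hW'.2.2.1
  have hxz : x ≤ z := homDensity_addApex_le A 1 hW
  have hyw : y ≤ w := homDensity_addApex_le A 1 hW'
  have hzw : 0 < z + w := (zpow_pos two_pos _).trans_le hmA
  calc (2 : ℝ) ^ (1 - (A.edgeFinset.card : ℤ) - (n + 1 : ℕ) * (Fintype.card V : ℤ))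
      = (2 : ℝ) ^ (1 - (A.edgeFinset.card : ℤ)) * c ^ (n + 1) := by
        rw [hc, ← zpow_natCast, ← zpow_mul, ← zpow_add₀ two_ne_zero]
        push_cast
        ring_nf
    _ ≤ (z + w) * c ^ (n + 1) := by gcongr
    _ = (c * (z + w)) ^ (n + 1) / (z + w) ^ n := by
        rw [mul_pow, pow_succ (z + w)]
        field_simp
    _ ≤ (x + y) ^ (n + 1) / (z + w) ^ n := by gcongr
    _ ≤ x ^ (n + 1) / z ^ n + y ^ (n + 1) / w ^ n :=
        add_pow_succ_div_add_pow_le hx hy (hx.trans hxz) (hy.trans hyw)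
          (fun hz => le_antisymm (hz ▸ hxz) hx) (fun hw => le_antisymm (hw ▸ hyw) hy) n
    _ ≤ _ := add_le_add ht1 ht2

/-- If `A` is a connected bipartite graph, `a ≥ 1`, and for a graphon `W` the stated
density inequalities hold, then `m_{A^{+a}}(W) ≥ 2^{1-e(A)-a·v(A)} = 2^{1-e(A^{+a})}`;
that is, `A^{+a}` is common. -/
theorem addApex_common {V : Type*} [Fintype V] [DecidableEq V]
    (A : SimpleGraph V) [DecidableRel A.Adj]
    (hconn : A.Connected) (hbip : A.Colorable 2)
    (a : ℕ) (ha : 1 ≤ a)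
    (W : unitInterval → unitInterval → ℝ) (hW : IsGraphon W)
    (ht1 : homDensity (addApex A 1) W ^ a / homDensity A W ^ (a - 1) ≤
      homDensity (addApex A a) W)
    (ht2 : homDensity (addApex A 1) (compl' W) ^ a / homDensity A (compl' W) ^ (a - 1) ≤
      homDensity (addApex A a) (compl' W))
    (hm1 : (2 : ℝ) ^ (-(Fintype.card V : ℤ)) *
        (homDensity A W + homDensity A (compl' W)) ≤
      homDensity (addApex A 1) W + homDensity (addApex A 1) (compl' W))
    (hmA : (2 : ℝ) ^ (1 - (A.edgeFinset.card : ℤ)) ≤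
      homDensity A W + homDensity A (compl' W)) :
    (2 : ℝ) ^ (1 - (A.edgeFinset.card : ℤ) - a * (Fintype.card V : ℤ)) ≤
      homDensity (addApex A a) W + homDensity (addApex A a) (compl' W) :=
  addApex_common_general A a ha W hW ht1 ht2 hm1 hmA
end
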